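/- arXiv:2108.09584 — 8 statements merged into one kernel-verified Lean document; each statement's English description precedes it below -/
import Mathlib

section
/- For any diverging sequence (r_n) of positive integers, the set A = {α ∈ ℝ/ℤ : there exists a diverging subsequence (n_k) with ‖r_{n_k} α‖_ℤ → 0} has full Lebesgue measure in the circle. -/
/-!
Fix `ε > 0` and `q n → ∞`, and let `S` be a set of `α` with `‖q n • α‖ ≥ ε` for all `n`.
At a Lebesgue density point of the lift of `S` to `ℝ`, a short interval `I` is filled by `S`
up to a fraction `< ε`. But for large `q` the set `{x | ‖q x‖ < ε}`, which avoids `S`, contains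
about `q |I|` disjoint intervals `((j - ε) / q, (j + ε) / q)` inside `I`, so it fills about a
fraction `2ε` of `I`. Hence `S` is null, so for almost every `α` and every `ε` we have
`‖r n • α‖ < ε` infinitely often: `0` is a cluster point of `‖r n • α‖`, which gives the
subsequence.
-/

open Filter Function MeasureTheory Metric Set

def nearIntMul (q : ℕ) (ε : ℝ) : Set ℝ := {x | ‖((q * x : ℝ) : UnitAddCircle)‖ < ε}

lemma isOpen_nearIntMul (q : ℕ) (ε : ℝ) : IsOpen (nearIntMul q ε) :=
  isOpen_lt (by fun_prop) continuous_const

lemma Ioo_subset_nearIntMul {q : ℕ} (hq : 0 < q) (ε : ℝ) (j : ℤ) :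
    Ioo ((j - ε) / q) ((j + ε) / q) ⊆ nearIntMul q ε := by
  intro x ⟨h₁, h₂⟩
  have hq' : (0 : ℝ) < q := by exact_mod_cast hq
  rw [div_lt_iff₀ hq'] at h₁
  rw [lt_div_iff₀ hq'] at h₂
  calc ‖((q * x : ℝ) : UnitAddCircle)‖ = |q * x - round ((q : ℝ) * x)| := UnitAddCircle.norm_eq
    _ ≤ |q * x - j| := round_le _ _
    _ < ε := abs_sub_lt_iff.2 ⟨by linarith, by linarith⟩

lemma pairwise_disjoint_Ioo_div {q : ℕ} (hq : 0 < q) {ε : ℝ} (hε : ε ≤ 1 / 2) :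
    Pairwise (Disjoint on fun j : ℤ => Ioo ((j - ε) / q) ((j + ε) / q)) := by
  intro i j hij
  refine disjoint_left.2 fun x hi hj => hij ?_
  have hq' : (0 : ℝ) < q := by exact_mod_cast hq
  simp only [mem_Ioo, div_lt_iff₀ hq', lt_div_iff₀ hq'] at hi hj
  have : |((i - j : ℤ) : ℝ)| < 1 := by push_cast; exact abs_sub_lt_iff.2 ⟨by linarith, by linarith⟩
  have : |i - j| < 1 := by exact_mod_cast this
  rw [abs_lt] at this
  omega

lemma card_Icc_ceil_floor_ge (u v : ℝ) : v - u - 1 ≤ ((Finset.Icc ⌈u⌉ ⌊v⌋).card : ℝ) := by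
  rw [Int.card_Icc]
  have h : ((⌊v⌋ + 1 - ⌈u⌉ : ℤ) : ℝ) ≤ ((⌊v⌋ + 1 - ⌈u⌉).toNat : ℤ) := by
    exact_mod_cast Int.self_le_toNat _
  push_cast at h
  linarith [Int.sub_one_lt_floor v, Int.ceil_lt_add_one u]

lemma le_volume_nearIntMul_inter_Icc {q : ℕ} (hq : 0 < q) {ε : ℝ} (hε : 0 < ε) (hε' : ε ≤ 1 / 2)
    (a b : ℝ) :
    ENNReal.ofReal (2 * ε * (b - a) - 4 * ε / q) ≤ volume (nearIntMul q ε ∩ Icc a b) := by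
  have hq' : (0 : ℝ) < q := by exact_mod_cast hq
  set J := Finset.Icc ⌈q * a + ε⌉ ⌊q * b - ε⌋
  set I : ℤ → Set ℝ := fun j => Ioo ((j - ε) / q) ((j + ε) / q)
  have hsub : ⋃ j ∈ J, I j ⊆ nearIntMul q ε ∩ Icc a b := by
    refine iUnion₂_subset fun j hj => subset_inter (Ioo_subset_nearIntMul hq ε j) ?_
    obtain ⟨hj₁, hj₂⟩ := Finset.mem_Icc.1 hj
    have h₁ : q * a + ε ≤ j := Int.ceil_le.1 hj₁
    have h₂ : (j : ℝ) ≤ q * b - ε := Int.le_floor.1 hj₂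
    refine Ioo_subset_Icc_self.trans (Icc_subset_Icc ?_ ?_)
    · rw [le_div_iff₀ hq']; linarith
    · rw [div_le_iff₀ hq']; linarith
  have hdisj : (J : Set ℤ).PairwiseDisjoint I := (pairwise_disjoint_Ioo_div hq hε').set_pairwise _
  have hcard := card_Icc_ceil_floor_ge (q * a + ε) (q * b - ε)
  calc ENNReal.ofReal (2 * ε * (b - a) - 4 * ε / q)
      ≤ ENNReal.ofReal (J.card * (2 * ε / q)) := by
        refine ENNReal.ofReal_le_ofReal ?_
        have : (q * (b - a) - 2) * (2 * ε / q) ≤ J.card * (2 * ε / q) :=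
          mul_le_mul_of_nonneg_right (by linarith) (by positivity)
        convert this using 1
        field_simp
        ring
    _ = ∑ j ∈ J, volume (I j) := by
        have hI : ∀ j, volume (I j) = ENNReal.ofReal (2 * ε / q) := fun j => by
          rw [Real.volume_Ioo]
          congr 1
          ring
        simp only [hI, Finset.sum_const, nsmul_eq_mul]
        rw [ENNReal.ofReal_mul (by positivity), ENNReal.ofReal_natCast]
    _ = volume (⋃ j ∈ J, I j) := (measure_biUnion_finset hdisj fun _ _ => measurableSet_Ioo).symm
    _ ≤ volume (nearIntMul q ε ∩ Icc a b) := measure_mono hsub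

theorem volume_eq_zero_of_disjoint_nearIntMul {q : ℕ → ℕ} (hq : Tendsto q atTop atTop) {ε : ℝ}
    (hε : 0 < ε) (hε' : ε ≤ 1 / 2) {S : Set ℝ} (hS : ∀ n, Disjoint S (nearIntMul (q n) ε)) :
    volume S = 0 := by
  by_contra hS0
  have : (ae (volume.restrict S)).NeBot := ae_neBot.2 (by rwa [Ne, Measure.restrict_eq_zero])
  obtain ⟨x, hx⟩ := (Besicovitch.ae_tendsto_measure_inter_div volume S).exists
  obtain ⟨δ, hdens, hδ⟩ : ∃ δ, ENNReal.ofReal (1 - ε) <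
      volume (S ∩ closedBall x δ) / volume (closedBall x δ) ∧ 0 < δ :=
    ((hx.eventually (lt_mem_nhds (ENNReal.ofReal_lt_one.2 (by linarith)))).and
      self_mem_nhdsWithin).exists
  obtain ⟨n, hn⟩ := (hq.eventually_ge_atTop ⌈2 / δ⌉₊).exists
  have hqn : 2 / δ ≤ q n := (Nat.le_ceil _).trans (by exact_mod_cast hn)
  have hqn₀ : 0 < q n := by exact_mod_cast (div_pos two_pos hδ).trans_le hqn
  set B := Icc (x - δ) (x + δ)
  rw [Real.volume_closedBall, Real.closedBall_eq_Icc,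
    ENNReal.lt_div_iff_mul_lt (by simp [hδ]) (.inl ENNReal.ofReal_ne_top),
    ← ENNReal.ofReal_mul (by linarith)] at hdens
  have hnear : ENNReal.ofReal (2 * δ * ε) ≤ volume (nearIntMul (q n) ε ∩ B) := by
    refine le_trans (ENNReal.ofReal_le_ofReal ?_) (le_volume_nearIntMul_inter_Icc hqn₀ hε hε' _ _)
    rw [div_le_iff₀ hδ] at hqn
    have : 4 * ε / q n ≤ 2 * δ * ε := by
      rw [div_le_iff₀ (by positivity)]; nlinarith
    linarith
  have hunion : volume (S ∩ B) + volume (nearIntMul (q n) ε ∩ B) ≤ volume B := by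
    rw [← measure_union ((hS n).mono inter_subset_left inter_subset_left)
      ((isOpen_nearIntMul _ _).measurableSet.inter measurableSet_Icc)]
    exact measure_mono (union_subset inter_subset_right inter_subset_right)
  have := (ENNReal.add_lt_add_of_lt_of_le ENNReal.ofReal_ne_top hdens hnear).trans_le hunion
  rw [Real.volume_Icc, ← ENNReal.ofReal_add (by nlinarith) (by positivity)] at this
  exact (ENNReal.ofReal_lt_ofReal_iff'.1 this).1.ne (by ring)

theorem ae_exists_norm_nsmul_lt {q : ℕ → ℕ} (hq : Tendsto q atTop atTop) {ε : ℝ} (hε : 0 < ε) :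
    ∀ᵐ α : UnitAddCircle, ∃ n, ‖q n • α‖ < ε := by
  have hS : IsClosed {α : UnitAddCircle | ∀ n, ε ≤ ‖q n • α‖} := by
    rw [ofPred_forall]
    exact isClosed_iInter fun n => isClosed_le continuous_const (by fun_prop)
  simp only [ae_iff, not_exists, not_lt]
  rw [AddCircle.add_projection_respects_measure 1 0 hS.measurableSet]
  refine measure_mono_null inter_subset_left (volume_eq_zero_of_disjoint_nearIntMul hq
    (lt_min hε one_half_pos) (min_le_right ε _) fun n => disjoint_left.2 fun x hx hnear => ?_)
  have hle : ε ≤ ‖((q n * x : ℝ) : UnitAddCircle)‖ := by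
    rw [← nsmul_eq_mul, AddCircle.coe_nsmul]; exact hx n
  exact (hle.trans_lt hnear).not_ge (min_le_left _ _)

theorem ae_frequently_norm_nsmul_lt {q : ℕ → ℕ} (hq : Tendsto q atTop atTop) {ε : ℝ}
    (hε : 0 < ε) : ∀ᵐ α : UnitAddCircle, ∃ᶠ n in atTop, ‖q n • α‖ < ε := by
  simp only [frequently_atTop]
  refine ae_all_iff.2 fun N => ?_
  filter_upwards [ae_exists_norm_nsmul_lt (hq.comp (tendsto_add_atTop_nat N)) hε]
    with α ⟨n, hn⟩ using ⟨n + N, le_add_self, hn⟩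

theorem ae_mapClusterPt_norm_nsmul {q : ℕ → ℕ} (hq : Tendsto q atTop atTop) :
    ∀ᵐ α : UnitAddCircle, MapClusterPt 0 atTop fun n => ‖q n • α‖ := by
  simp only [nhds_basis_ball_inv_nat_succ.mapClusterPt_iff_frequently, forall_const,
    mem_ball_zero_iff, norm_norm]
  exact ae_all_iff.2 fun m => ae_frequently_norm_nsmul_lt hq Nat.one_div_pos_of_nat

theorem stmt1_general (r : ℕ → ℕ) (hr : Tendsto r atTop atTop) :
    volume {α : AddCircle (1 : ℝ) |
      ∃ nk : ℕ → ℕ, StrictMono nk ∧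
        Tendsto (fun k => ‖(r (nk k)) • α‖) atTop (nhds 0)} = 1 := by
  have h : ∀ᵐ α : AddCircle (1 : ℝ), ∃ nk : ℕ → ℕ, StrictMono nk ∧
      Tendsto (fun k => ‖(r (nk k)) • α‖) atTop (nhds 0) :=
    (ae_mapClusterPt_norm_nsmul hr).mono fun _ hα => hα.tendsto_subseq
  rw [measure_congr (ae_eq_univ.2 h), UnitAddCircle.measure_univ]

/-- For any diverging sequence `(r n)` of positive integers, the set of `α` in the circle
`ℝ/ℤ` such that `‖r_{n_k} α‖_ℤ → 0` along some diverging subsequence `(n_k)` has full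
Lebesgue measure (the Lebesgue/Haar measure on `ℝ/ℤ` has total mass `1`). -/
theorem stmt1 (r : ℕ → ℕ) (hrpos : ∀ n, 0 < r n) (hr : Tendsto r atTop atTop) :
    volume {α : AddCircle (1 : ℝ) |
      ∃ nk : ℕ → ℕ, StrictMono nk ∧
        Tendsto (fun k => ‖(r (nk k)) • α‖) atTop (nhds 0)} = 1 :=
  stmt1_general r hr
end

section
/- Let (r_n) be an increasing sequence of positive integers with r_{n+1}/r_n → ∞, and (ε_n) ⊂ (0,1) with (r_{n+1}/r_n)·ε_n ≥ 1 for all n. Then for all m > n, Leb(A_n ∩ A_m) ≤ Leb(A_m)·(Leb(A_n) + r_n/r_m), where A_n = {α ∈ ℝ/ℤ : ‖r_n α‖_ℤ ≤ ε_n}. -/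
/-!
Lift to `ℝ` through the fundamental domain `((ε - 1)/N, (ε - 1)/N + 1]`: a point `x` there with
`‖N x‖ ≤ ε` lies within `ε/N` of `k/N` for `k = ⌈N x - ε⌉ ∈ [0, N)`, so the lift of
`{α | ‖N • α‖ ≤ ε}` is covered by `N` windows of length `2ε/N`. The lift of `(M • ·)⁻¹' E` is
`1/M`-periodic, so it meets a window of length `L` in measure at most `(L + 1/M) · Leb E`.
Summing gives `Leb ({α | ‖N • α‖ ≤ ε} ∩ (M • ·)⁻¹' E) ≤ Leb E · (2ε + N/M)`; for `2ε ≥ 1` the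
bound is trivial. With `E` the closed ball of radius `ε_m`, `(M • ·)⁻¹' E = A_m` and
`Leb E = Leb A_m`.
-/

open MeasureTheory Set

namespace AddCircle

variable {T : ℝ} [Fact (0 < T)]

theorem volume_preimage_inter_Ioc_add_nat_mul {U : Set (AddCircle T)} (hU : MeasurableSet U)
    (t : ℝ) (K : ℕ) :
    volume (((↑) : ℝ → AddCircle T) ⁻¹' U ∩ Ioc t (t + K * T)) = K * volume U := by
  induction K with
  | zero => simp
  | succ K ih =>
    have hT : 0 < T := Fact.out
    have hsplit : Ioc t (t + (K + 1 : ℕ) * T)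
        = Ioc t (t + K * T) ∪ Ioc (t + K * T) (t + K * T + T) := by
      rw [Ioc_union_Ioc_eq_Ioc (le_add_of_nonneg_right (by positivity)) (by linarith)]
      push_cast; ring_nf
    rw [hsplit, inter_union_distrib_left, measure_union, ih,
      ← add_projection_respects_measure T _ hU]
    · push_cast; ring
    · exact (Ioc_disjoint_Ioc_of_le le_rfl).mono inter_subset_right inter_subset_right
    · exact (measurableSet_quotient.mp hU).inter measurableSet_Ioc

theorem volume_preimage_nsmul {N : ℕ} (hN : 0 < N) {U : Set (AddCircle T)}
    (hU : MeasurableSet U) : volume ((N • ·) ⁻¹' U) = volume U := by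
  have := (Measure.measurePreserving_zsmul (volume : Measure (AddCircle T))
    (n := N) (by exact_mod_cast hN.ne')).measure_preimage hU.nullMeasurableSet
  simpa [natCast_zsmul] using this

theorem volume_setOf_norm_nsmul_le {N : ℕ} (hN : 0 < N) (ε : ℝ) :
    volume {α : AddCircle T | ‖N • α‖ ≤ ε} = ENNReal.ofReal (min T (2 * ε)) := by
  have hball : {α : AddCircle T | ‖N • α‖ ≤ ε} = (N • ·) ⁻¹' Metric.closedBall 0 ε := by
    ext; simp
  rw [hball, volume_preimage_nsmul hN measurableSet_closedBall, volume_closedBall]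

end AddCircle

theorem volume_setOf_coe_mul_mem_inter_Icc_le {a : ℝ} (ha : 0 < a) {E : Set UnitAddCircle}
    (hE : MeasurableSet E) {u v : ℝ} (huv : u ≤ v) :
    volume ({x : ℝ | ((a * x : ℝ) : UnitAddCircle) ∈ E} ∩ Icc u v)
      ≤ ENNReal.ofReal (v - u + a⁻¹) * volume E := by
  set K := ⌈a * (v - u)⌉₊
  have hscale : {x : ℝ | ((a * x : ℝ) : UnitAddCircle) ∈ E} ∩ Icc u v
      = (a * ·) ⁻¹' (((↑) : ℝ → UnitAddCircle) ⁻¹' E ∩ Icc (a * u) (a * v)) := by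
    ext x; simp [mul_le_mul_iff_right₀ ha]
  have hwindow :
      volume (((↑) : ℝ → UnitAddCircle) ⁻¹' E ∩ Icc (a * u) (a * v)) ≤ K * volume E := by
    calc _ ≤ volume (((↑) : ℝ → UnitAddCircle) ⁻¹' E ∩ Icc (a * u) (a * u + K * 1)) := by
          gcongr
          linarith [Nat.le_ceil (a * (v - u))]
      _ = K * volume E := by
          rw [← measure_congr ((Filter.EventuallyEq.refl _ _).inter Ioc_ae_eq_Icc),
            AddCircle.volume_preimage_inter_Ioc_add_nat_mul hE]
  have hK : a⁻¹ * K ≤ v - u + a⁻¹ := by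
    have := Nat.ceil_lt_add_one (mul_nonneg ha.le (sub_nonneg.2 huv))
    calc a⁻¹ * K ≤ a⁻¹ * (a * (v - u) + 1) := by gcongr
      _ = v - u + a⁻¹ := by field_simp
  rw [hscale, Real.volume_preimage_mul_left ha.ne', abs_of_pos (inv_pos.2 ha)]
  calc ENNReal.ofReal a⁻¹ * volume _ ≤ ENNReal.ofReal a⁻¹ * (K * volume E) := by gcongr
    _ = ENNReal.ofReal (a⁻¹ * K) * volume E := by
      rw [ENNReal.ofReal_mul (by positivity), ENNReal.ofReal_natCast, mul_assoc]
    _ ≤ _ := by gcongr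

theorem setOf_norm_coe_mul_le_inter_Ioc_subset {N : ℕ} (hN : 0 < N) (ε : ℝ) :
    {x : ℝ | ‖((N * x : ℝ) : UnitAddCircle)‖ ≤ ε} ∩ Ioc ((ε - 1) / N) ((ε - 1) / N + 1)
      ⊆ ⋃ k ∈ Finset.range N, Icc ((k - ε) / N) ((k + ε) / N) := by
  have hN' : (0 : ℝ) < N := by exact_mod_cast hN
  rintro x ⟨hnorm, hlo, hhi⟩
  rw [mem_ofPred_eq, UnitAddCircle.norm_eq, abs_le] at hnorm
  rw [div_lt_iff₀ hN'] at hlo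
  rw [← sub_le_iff_le_add, le_div_iff₀ hN'] at hhi
  obtain ⟨k, hk⟩ : ∃ k : ℕ, ⌈N * x - ε⌉ = k :=
    Int.eq_ofNat_of_zero_le (Int.ceil_nonneg_of_neg_one_lt (by linarith))
  have hk_ge : N * x - ε ≤ k := by exact_mod_cast hk ▸ Int.le_ceil (N * x - ε)
  have hk_le : (k : ℝ) ≤ N * x + ε := by
    have : (k : ℤ) ≤ round (N * x : ℝ) := hk.symm ▸ Int.ceil_le.2 (by linarith)
    have : (k : ℝ) ≤ round (N * x : ℝ) := by exact_mod_cast this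
    linarith
  have hk_lt : k < N := by
    have : (k : ℤ) ≤ N - 1 := hk.symm ▸ Int.ceil_le.2 (by push_cast; linarith)
    omega
  refine mem_biUnion (Finset.mem_range.2 hk_lt) ⟨?_, ?_⟩
  · rw [div_le_iff₀ hN']; linarith
  · rw [le_div_iff₀ hN']; linarith

theorem volume_setOf_norm_nsmul_le_inter_preimage_le_ofReal {N M : ℕ} (hN : 0 < N) (hM : 0 < M)
    {ε : ℝ} (hε : 0 ≤ ε) {E : Set UnitAddCircle} (hE : MeasurableSet E) :
    volume ({α : UnitAddCircle | ‖N • α‖ ≤ ε} ∩ (M • ·) ⁻¹' E)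
      ≤ volume E * ENNReal.ofReal (2 * ε + N / M) := by
  have hN' : (0 : ℝ) < N := by exact_mod_cast hN
  have hM' : (0 : ℝ) < M := by exact_mod_cast hM
  have hmeas : MeasurableSet ({α : UnitAddCircle | ‖N • α‖ ≤ ε} ∩ (M • ·) ⁻¹' E) :=
    (isClosed_le (continuous_nsmul N).norm continuous_const).measurableSet.inter
      ((continuous_nsmul M).measurable hE)
  have hcover : ((↑) : ℝ → UnitAddCircle) ⁻¹' ({α | ‖N • α‖ ≤ ε} ∩ (M • ·) ⁻¹' E)
        ∩ Ioc ((ε - 1) / N) ((ε - 1) / N + 1)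
      ⊆ ⋃ k ∈ Finset.range N,
          {x : ℝ | ((M * x : ℝ) : UnitAddCircle) ∈ E} ∩ Icc ((k - ε) / N) ((k + ε) / N) := by
    rintro x ⟨⟨hxN, hxM⟩, hxI⟩
    simp only [mem_preimage, mem_ofPred_eq, ← AddCircle.coe_nsmul, nsmul_eq_mul] at hxN hxM
    obtain ⟨k, hk, hxk⟩ := mem_iUnion₂.1 (setOf_norm_coe_mul_le_inter_Ioc_subset hN ε ⟨hxN, hxI⟩)
    exact mem_iUnion₂.2 ⟨k, hk, hxM, hxk⟩
  have hlen : ∀ k : ℕ, ((k + ε) / N - (k - ε) / N : ℝ) = 2 * ε / N := fun k => by ring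
  calc volume ({α : UnitAddCircle | ‖N • α‖ ≤ ε} ∩ (M • ·) ⁻¹' E)
      = volume (((↑) : ℝ → UnitAddCircle) ⁻¹' ({α | ‖N • α‖ ≤ ε} ∩ (M • ·) ⁻¹' E)
          ∩ Ioc ((ε - 1) / N) ((ε - 1) / N + 1)) :=
        AddCircle.add_projection_respects_measure 1 _ hmeas
    _ ≤ ∑ k ∈ Finset.range N,
          volume ({x : ℝ | ((M * x : ℝ) : UnitAddCircle) ∈ E} ∩ Icc ((k - ε) / N) ((k + ε) / N)) :=
        (measure_mono hcover).trans (measure_biUnion_finset_le (Finset.range N) _)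
    _ ≤ ∑ _k ∈ Finset.range N, ENNReal.ofReal (2 * ε / N + (M : ℝ)⁻¹) * volume E := by
        gcongr with k
        rw [← hlen k]
        exact volume_setOf_coe_mul_mem_inter_Icc_le hM' hE (by gcongr; linarith)
    _ = volume E * ENNReal.ofReal (2 * ε + N / M) := by
        rw [Finset.sum_const, Finset.card_range, nsmul_eq_mul, ← mul_assoc, mul_comm,
          ← ENNReal.ofReal_natCast, ← ENNReal.ofReal_mul hN'.le]
        congr 2
        field_simp

theorem volume_setOf_norm_nsmul_le_inter_preimage_le {N M : ℕ} (hN : 0 < N) (hM : 0 < M)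
    {ε : ℝ} (hε : 0 ≤ ε) {E : Set UnitAddCircle} (hE : MeasurableSet E) :
    volume ({α : UnitAddCircle | ‖N • α‖ ≤ ε} ∩ (M • ·) ⁻¹' E)
      ≤ volume E * (volume {α : UnitAddCircle | ‖N • α‖ ≤ ε} + ENNReal.ofReal (N / M)) := by
  rw [AddCircle.volume_setOf_norm_nsmul_le hN]
  rcases le_total 1 (2 * ε) with h | h
  · calc _ ≤ volume ((M • ·) ⁻¹' E : Set UnitAddCircle) := measure_mono inter_subset_right
      _ = volume E * 1 := by rw [AddCircle.volume_preimage_nsmul hM hE, mul_one]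
      _ ≤ _ := by rw [min_eq_left h, ENNReal.ofReal_one]; gcongr; exact le_self_add
  · rw [min_eq_right h, ← ENNReal.ofReal_add (by positivity) (by positivity)]
    exact volume_setOf_norm_nsmul_le_inter_preimage_le_ofReal hN hM hε hE

theorem stmt3_general (r : ℕ → ℕ) (hrpos : ∀ n, 0 < r n)
    (ε : ℕ → ℝ) (hε : ∀ n, ε n ∈ Set.Ioo (0 : ℝ) 1)
    (A : ℕ → Set (AddCircle (1 : ℝ)))
    (hA : ∀ n, A n = {α : AddCircle (1 : ℝ) | ‖(r n) • α‖ ≤ ε n}) :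
    ∀ m n : ℕ, n < m →
      volume (A n ∩ A m) ≤ volume (A m) * (volume (A n) + ENNReal.ofReal ((r n : ℝ) / (r m : ℝ))) := by
  intro m n _
  have hAm : A m = (r m • ·) ⁻¹' Metric.closedBall 0 (ε m) := by
    rw [hA m]; ext; simp
  rw [hAm, hA n, AddCircle.volume_preimage_nsmul (hrpos m) measurableSet_closedBall]
  exact volume_setOf_norm_nsmul_le_inter_preimage_le (hrpos n) (hrpos m) (hε n).1.le
    measurableSet_closedBall

/-- Let `(r n)` be an increasing sequence of positive integers with `r_{n+1}/r_n → ∞`,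
and `(ε n) ⊂ (0,1)` with `(r_{n+1}/r_n) ε_n ≥ 1` for all `n`.  Then, for all `m > n`,
the sets `A_n = {α ∈ ℝ/ℤ : ‖r_n α‖_ℤ ≤ ε_n}` satisfy the almost-independence estimate
`Leb (A_n ∩ A_m) ≤ Leb (A_m) (Leb (A_n) + r_n / r_m)`. -/
theorem stmt3 (r : ℕ → ℕ) (hrpos : ∀ n, 0 < r n) (hrmono : StrictMono r)
    (hratio : Filter.Tendsto (fun n => (r (n + 1) : ℝ) / (r n : ℝ)) Filter.atTop Filter.atTop)
    (ε : ℕ → ℝ) (hε : ∀ n, ε n ∈ Set.Ioo (0 : ℝ) 1)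
    (hεr : ∀ n, 1 ≤ (r (n + 1) : ℝ) / (r n : ℝ) * ε n)
    (A : ℕ → Set (AddCircle (1 : ℝ)))
    (hA : ∀ n, A n = {α : AddCircle (1 : ℝ) | ‖(r n) • α‖ ≤ ε n}) :
    ∀ m n : ℕ, n < m →
      volume (A n ∩ A m) ≤ volume (A m) * (volume (A n) + ENNReal.ofReal ((r n : ℝ) / (r m : ℝ))) :=
  stmt3_general r hrpos ε hε A hA
end

section
/- (Kochen–Stone type Borel–Cantelli) Let (A_n) be a sequence of measurable subsets of a probability space with ∑ μ(A_n) = ∞. Then μ(limsup A_n) ≥ limsup_{n→∞} (∑_{k=1}^n μ(A_k))² / (∑_{k,h=1}^n μ(A_k ∩ A_h)). -/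
/-!
Put `a n = ∑_{k<n} μ(A k)` and let `b n` be the double sum of `μ(A k ∩ A h)` over `k, h < n`.
For `m ≤ n`, Cauchy–Schwarz applied to `∑_{m ≤ k < n} 𝟙_{A k}`, which vanishes off
`⋃_{k ≥ m} A k`, gives `(a n - a m)² ≤ b n · μ(⋃_{k ≥ m} A k)`. As `a n → ∞` we have
`a n / (a n - a m) → 1`, so `limsup a n² / b n ≤ μ(⋃_{k ≥ m} A k)` for every `m`, and these
measures decrease to `μ(limsup A)`.
-/

open MeasureTheory Filter
open scoped ENNReal Topology

namespace ENNReal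

theorem sq_div_le_div_sq_mul {a b c d : ℝ≥0∞} (hd₀ : d ≠ 0) (hd : d ≠ ∞) (h : d ^ 2 ≤ b * c) :
    a ^ 2 / b ≤ (a / d) ^ 2 * c := by
  refine ENNReal.div_le_of_le_mul ?_
  calc a ^ 2 = (a / d) ^ 2 * d ^ 2 := by rw [← mul_pow, ENNReal.div_mul_cancel hd₀ hd]
    _ ≤ (a / d) ^ 2 * (b * c) := by gcongr
    _ = (a / d) ^ 2 * c * b := by ring

theorem tendsto_div_tsub_const_of_tendsto_top {α : Type*} {l : Filter α} {a : α → ℝ≥0∞}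
    {x : ℝ≥0∞} (hx : x ≠ ∞) (ha : Tendsto a l (𝓝 ∞)) (ha' : ∀ i, a i ≠ ∞) :
    Tendsto (fun i => a i / (a i - x)) l (𝓝 1) := by
  have hsub : Tendsto (fun i => a i - x) l (𝓝 ∞) := by
    simpa [ENNReal.top_sub hx] using ENNReal.Tendsto.sub ha tendsto_const_nhds (Or.inr hx)
  have hrest : Tendsto (fun i => 1 + x / (a i - x)) l (𝓝 1) := by
    simpa using tendsto_const_nhds.add (ENNReal.Tendsto.const_div hsub (Or.inr hx))
  refine hrest.congr' ?_
  filter_upwards [ha.eventually (lt_mem_nhds hx.lt_top)] with i hi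
  have hne : a i - x ≠ 0 := (tsub_pos_of_lt hi).ne'
  calc 1 + x / (a i - x) = (a i - x + x) / (a i - x) := by
        rw [ENNReal.add_div, ENNReal.div_self hne (ne_top_of_le_ne_top (ha' i) tsub_le_self)]
    _ = a i / (a i - x) := by rw [tsub_add_cancel_of_le hi.le]

theorem limsup_sq_div_le {a b : ℕ → ℝ≥0∞} {x c : ℝ≥0∞} (hx : x ≠ ∞)
    (ha : Tendsto a atTop (𝓝 ∞)) (ha' : ∀ n, a n ≠ ∞)
    (h : ∀ᶠ n in atTop, (a n - x) ^ 2 ≤ b n * c) :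
    limsup (fun n => a n ^ 2 / b n) atTop ≤ c := by
  have hlim : Tendsto (fun n => (a n / (a n - x)) ^ 2 * c) atTop (𝓝 c) := by
    simpa using ENNReal.Tendsto.mul_const (((ENNReal.continuous_pow 2).tendsto 1).comp
      (tendsto_div_tsub_const_of_tendsto_top hx ha ha')) (Or.inl (by simp))
  refine (limsup_le_limsup ?_).trans_eq hlim.limsup_eq
  filter_upwards [h, ha.eventually (lt_mem_nhds hx.lt_top)] with n hn hxn
  exact sq_div_le_div_sq_mul (tsub_pos_of_lt hxn).ne'
    (ne_top_of_le_ne_top (ha' n) tsub_le_self) hn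

end ENNReal

namespace MeasureTheory

variable {Ω : Type*} [MeasurableSpace Ω]

theorem lintegral_sq_le_lintegral_sq_mul_measure_univ (ν : Measure Ω) {f : Ω → ℝ≥0∞}
    (hf : AEMeasurable f ν) : (∫⁻ ω, f ω ∂ν) ^ 2 ≤ (∫⁻ ω, f ω ^ 2 ∂ν) * ν Set.univ := by
  have hconj : (2 : ℝ).HolderConjugate 2 := Real.holderConjugate_iff.mpr ⟨one_lt_two, by norm_num⟩
  have h := ENNReal.lintegral_mul_le_Lp_mul_Lq ν hconj hf (aemeasurable_const (b := 1))
  simp only [Pi.mul_apply, mul_one, ENNReal.rpow_two, one_pow, lintegral_const, one_mul] at h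
  calc (∫⁻ ω, f ω ∂ν) ^ 2
      ≤ ((∫⁻ ω, f ω ^ 2 ∂ν) ^ (1 / 2 : ℝ) * ν Set.univ ^ (1 / 2 : ℝ)) ^ 2 := by gcongr
    _ = (∫⁻ ω, f ω ^ 2 ∂ν) * ν Set.univ := by
        rw [mul_pow, ← ENNReal.rpow_natCast, ← ENNReal.rpow_natCast, ← ENNReal.rpow_mul,
          ← ENNReal.rpow_mul]
        norm_num

theorem lintegral_sq_le_lintegral_sq_mul_measure (μ : Measure Ω) {f : Ω → ℝ≥0∞}
    (hf : AEMeasurable f μ) {s : Set Ω} (hfs : Function.support f ⊆ s) :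
    (∫⁻ ω, f ω ∂μ) ^ 2 ≤ (∫⁻ ω, f ω ^ 2 ∂μ) * μ s := by
  calc (∫⁻ ω, f ω ∂μ) ^ 2 = (∫⁻ ω in s, f ω ∂μ) ^ 2 := by
        rw [setLIntegral_eq_of_support_subset hfs]
    _ ≤ (∫⁻ ω in s, f ω ^ 2 ∂μ) * μ s := by
        simpa [Measure.restrict_apply_univ] using
          lintegral_sq_le_lintegral_sq_mul_measure_univ (μ.restrict s) hf.restrict
    _ ≤ (∫⁻ ω, f ω ^ 2 ∂μ) * μ s := by gcongr; exact Measure.restrict_le_self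

variable {ι : Type*} {A : ι → Set Ω}

theorem lintegral_sum_indicator_one (μ : Measure Ω) (hA : ∀ i, MeasurableSet (A i))
    (s : Finset ι) : ∫⁻ ω, ∑ k ∈ s, (A k).indicator 1 ω ∂μ = ∑ k ∈ s, μ (A k) := by
  rw [lintegral_finsetSum _ fun k _ => measurable_one.indicator (hA k)]
  exact Finset.sum_congr rfl fun k _ => lintegral_indicator_one (hA k)

theorem lintegral_sq_sum_indicator_one (μ : Measure Ω) (hA : ∀ i, MeasurableSet (A i))
    (s : Finset ι) :
    ∫⁻ ω, (∑ k ∈ s, (A k).indicator 1 ω) ^ 2 ∂μ = ∑ k ∈ s, ∑ h ∈ s, μ (A k ∩ A h) := by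
  have hsq : ∀ ω, (∑ k ∈ s, (A k).indicator 1 ω) ^ 2 =
      ∑ k ∈ s, ∑ h ∈ s, (A k ∩ A h).indicator (1 : Ω → ℝ≥0∞) ω := fun ω => by
    simp only [sq, Finset.sum_mul_sum, Set.inter_indicator_one, Pi.mul_apply]
  simp_rw [hsq]
  rw [lintegral_finsetSum _ fun k _ => Finset.measurable_sum _ fun h _ =>
    measurable_one.indicator ((hA k).inter (hA h))]
  exact Finset.sum_congr rfl fun k _ => lintegral_sum_indicator_one μ
    (fun h => (hA k).inter (hA h)) s

theorem sq_sum_measure_le_sum_measure_inter_mul_measure_biUnion (μ : Measure Ω)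
    (hA : ∀ i, MeasurableSet (A i)) (s : Finset ι) :
    (∑ k ∈ s, μ (A k)) ^ 2 ≤ (∑ k ∈ s, ∑ h ∈ s, μ (A k ∩ A h)) * μ (⋃ k ∈ s, A k) := by
  rw [← lintegral_sum_indicator_one μ hA, ← lintegral_sq_sum_indicator_one μ hA]
  refine lintegral_sq_le_lintegral_sq_mul_measure μ
    (Finset.measurable_sum _ fun k _ => measurable_one.indicator (hA k)).aemeasurable ?_
  exact (Finset.support_sum _ _).trans
    (Set.biUnion_mono subset_rfl fun k _ => Set.support_indicator_subset)

theorem sq_sum_Ico_measure_le {A : ℕ → Set Ω} (μ : Measure Ω) (hA : ∀ n, MeasurableSet (A n))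
    (m n : ℕ) :
    (∑ k ∈ Finset.Ico m n, μ (A k)) ^ 2 ≤
      (∑ k ∈ Finset.range n, ∑ h ∈ Finset.range n, μ (A k ∩ A h)) * μ (⋃ k ≥ m, A k) := by
  have hsub : Finset.Ico m n ⊆ Finset.range n := fun k hk =>
    Finset.mem_range.2 (Finset.mem_Ico.1 hk).2
  refine (sq_sum_measure_le_sum_measure_inter_mul_measure_biUnion μ hA _).trans ?_
  refine mul_le_mul' ?_ (measure_mono ?_)
  · exact (Finset.sum_le_sum fun k _ => Finset.sum_le_sum_of_subset hsub).trans
      (Finset.sum_le_sum_of_subset hsub)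
  · exact Set.biUnion_subset_biUnion_left fun k hk => (Finset.mem_Ico.1 hk).1

theorem measure_limsup_eq_iInf_measure_iUnion_ge {A : ℕ → Set Ω} (μ : Measure Ω)
    [IsFiniteMeasure μ] (hA : ∀ n, MeasurableSet (A n)) :
    μ (limsup A atTop) = ⨅ m, μ (⋃ k ≥ m, A k) := by
  rw [limsup_eq_iInf_iSup_of_nat]
  refine Antitone.measure_iInter ?_ (fun m => ?_) ⟨0, measure_ne_top μ _⟩
  · exact fun i j hij => Set.biUnion_subset_biUnion_left fun k hk => hij.trans hk
  · exact (MeasurableSet.biUnion (Set.to_countable _) fun k _ => hA k).nullMeasurableSet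

end MeasureTheory

/-- (Kochen–Stone type Borel–Cantelli) Let `(A n)` be a sequence of measurable subsets of a
probability space with `∑ μ(A n) = ∞`.  Then
`μ (limsup A) ≥ limsup_n (∑_{k<n} μ(A k))² / (∑_{k,h<n} μ(A k ∩ A h))`. -/
theorem stmt4 {Ω : Type*} [MeasurableSpace Ω] (μ : Measure Ω) [IsProbabilityMeasure μ]
    (A : ℕ → Set Ω) (hA : ∀ n, MeasurableSet (A n))
    (hsum : (∑' n, μ (A n)) = ⊤) :
    limsup (fun n =>
        (∑ k ∈ Finset.range n, μ (A k)) ^ 2 /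
          (∑ k ∈ Finset.range n, ∑ h ∈ Finset.range n, μ (A k ∩ A h))) atTop
      ≤ μ (limsup A atTop) := by
  have hfin : ∀ n, ∑ k ∈ Finset.range n, μ (A k) ≠ ∞ := fun n =>
    ENNReal.sum_ne_top.2 fun k _ => measure_ne_top μ _
  have hdiv : Tendsto (fun n => ∑ k ∈ Finset.range n, μ (A k)) atTop (𝓝 ∞) :=
    hsum ▸ ENNReal.tendsto_nat_tsum _
  rw [measure_limsup_eq_iInf_measure_iUnion_ge μ hA]
  refine le_iInf fun m => ENNReal.limsup_sq_div_le (hfin m) hdiv hfin ?_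
  filter_upwards [eventually_ge_atTop m] with n hmn
  rw [← Finset.sum_range_add_sum_Ico _ hmn, ENNReal.add_sub_cancel_left (hfin m)]
  exact sq_sum_Ico_measure_le μ hA m n
end

section
/- Let β be irrational with continued-fraction denominators (q_n), let g : ℝ/ℤ → ℝ/ℤ be a homeomorphism conjugate to R_β via a homeomorphism H (H ∘ R_β = g ∘ H) such that no C¹ conjugacy between R_β and g exists. Let α be irrational Diophantine such that (q_{n_k}+1)α → 0 (mod 1) along some diverging subsequence (n_k). Then there is no C¹ diffeomorphism F of the 2-torus conjugating T₁ = R_α × R_β to T₂ = R_α × g. -/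
open Filter

/-- A map of the circle `ℝ/ℤ` is of class `C¹` if it lifts to a `C¹` map `ℝ → ℝ`. -/
def IsC1CircleMap (h : AddCircle (1 : ℝ) → AddCircle (1 : ℝ)) : Prop :=
  ∃ h' : ℝ → ℝ, ContDiff ℝ 1 h' ∧ ∀ x : ℝ, h (x : AddCircle (1 : ℝ)) = ((h' x : ℝ) : AddCircle (1 : ℝ))

/-- A map of the 2-torus `(ℝ/ℤ)²` is of class `C¹` if it lifts to a `C¹` map `ℝ² → ℝ²`. -/
def IsC1TorusMap
    (F : AddCircle (1 : ℝ) × AddCircle (1 : ℝ) → AddCircle (1 : ℝ) × AddCircle (1 : ℝ)) : Prop :=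
  ∃ F' : ℝ × ℝ → ℝ × ℝ, ContDiff ℝ 1 F' ∧
    ∀ v : ℝ × ℝ, F ((v.1 : AddCircle (1 : ℝ)), (v.2 : AddCircle (1 : ℝ)))
      = (((F' v).1 : AddCircle (1 : ℝ)), ((F' v).2 : AddCircle (1 : ℝ)))

/-!
Iterating the conjugacy `m_k = q_{n_k} + 1` times, `T₁^{m_k}` tends to `id × R_β` (as `m_k α → 0`
and `m_k β → β`) while `T₂^{m_k} = R_{m_k α} × H R_{m_k β} H⁻¹` tends to `id × g`, so by continuity
`F` conjugates `id × R_β` to `id × g`. The first coordinate of `F (0, ·)` is then `R_β`-invariant,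
hence constant by minimality of the irrational rotation, and likewise that of `F⁻¹ (c, ·)` is
`g`-invariant. So `F` maps the circle `{0} × 𝕋` onto a circle `{c} × 𝕋`, and on it the second
coordinate of `F` is a `C¹` conjugacy from `R_β` to `g`.
-/

open Function Topology

local notation "𝕋" => AddCircle (1 : ℝ)

section Circle

variable {X : Type*} [TopologicalSpace X] [T2Space X] {β : ℝ}

theorem AddCircle.apply_eq_apply_zero_of_periodic (hβ : Irrational β) {f : 𝕋 → X}
    (hf : Continuous f) (hper : Periodic f (β : 𝕋)) (y : 𝕋) : f y = f 0 := by
  have hdense : DenseRange (· • (β : 𝕋) : ℤ → 𝕋) :=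
    AddCircle.denseRange_zsmul_coe_iff.2 (by simpa using hβ)
  have hconst : f = fun _ => f 0 :=
    hdense.equalizer hf continuous_const (funext hper.zsmul_eq)
  exact congrFun hconst y

theorem AddCircle.apply_eq_of_semiconj (hβ : Irrational β) {g : 𝕋 → 𝕋} (H : 𝕋 ≃ₜ 𝕋)
    (hH : Semiconj H (· + (β : 𝕋)) g) {f : 𝕋 → X} (hf : Continuous f)
    (hinv : ∀ z, f (g z) = f z) (z z' : 𝕋) : f z = f z' := by
  have hper : Periodic (f ∘ H) (β : 𝕋) := fun y => by simp [hH.eq, hinv]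
  have key := AddCircle.apply_eq_apply_zero_of_periodic hβ (hf.comp H.continuous) hper
  rw [← H.apply_symm_apply z, ← H.apply_symm_apply z']
  exact (key _).trans (key _).symm

theorem AddCircle.tendsto_nsmul_coe_zero {ι : Type*} {l : Filter ι} {n : ι → ℕ} {a : ℝ}
    (h : Tendsto (fun k => ‖(((n k : ℝ) * a : ℝ) : 𝕋)‖) l (𝓝 0)) :
    Tendsto (fun k => n k • (a : 𝕋)) l (𝓝 0) := by
  have hnorm : ∀ k, ‖n k • (a : 𝕋)‖ = ‖(((n k : ℝ) * a : ℝ) : 𝕋)‖ := fun k => by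
    rw [← AddCircle.coe_nsmul, nsmul_eq_mul]
  rw [tendsto_zero_iff_norm_tendsto_zero]
  simpa only [hnorm] using h

end Circle

section Limits

variable {ι X Y : Type*} [TopologicalSpace X] [TopologicalSpace Y] {l : Filter ι} {m : ι → ℕ}

theorem tendsto_add_right_iterate [AddMonoid X] [ContinuousAdd X] {a b : X}
    (h : Tendsto (fun k => m k • a) l (𝓝 b)) (x : X) :
    Tendsto (fun k => (· + a)^[m k] x) l (𝓝 (x + b)) := by
  simpa only [add_right_iterate_apply] using tendsto_const_nhds.add h

theorem Function.Semiconj.tendsto_iterate_right {f : X → X} {g : Y → Y} (H : X ≃ₜ Y)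
    (hH : Semiconj H f g) {u : X → X} (hu : ∀ x, Tendsto (fun k => f^[m k] x) l (𝓝 (u x)))
    (y : Y) : Tendsto (fun k => g^[m k] y) l (𝓝 (H (u (H.symm y)))) := by
  have hg : ∀ n, g^[n] y = H (f^[n] (H.symm y)) := fun n => by
    rw [(hH.iterate_right n).eq, H.apply_symm_apply]
  simpa only [hg, comp_def] using (H.continuous.tendsto _).comp (hu (H.symm y))

theorem Function.Semiconj.of_tendsto_iterate [T2Space Y] [l.NeBot] {F : X → Y}
    (hF : Continuous F) {f : X → X} {g : Y → Y} (h : Semiconj F f g) {u : X → X} {v : Y → Y}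
    (hu : ∀ x, Tendsto (fun k => f^[m k] x) l (𝓝 (u x)))
    (hv : ∀ y, Tendsto (fun k => g^[m k] y) l (𝓝 (v y))) : Semiconj F u v := fun x =>
  tendsto_nhds_unique ((hF.tendsto _).comp (hu x)) <| by
    simpa only [comp_def, (h.iterate_right _).eq] using hv (F x)

end Limits

def Homeomorph.sliceSnd {X X' Y Y' : Type*} [TopologicalSpace X] [TopologicalSpace X']
    [TopologicalSpace Y] [TopologicalSpace Y'] (Φ : X × Y ≃ₜ X' × Y') {x₀ : X} {c : X'}
    (h₁ : ∀ y, (Φ (x₀, y)).1 = c) (h₂ : ∀ z, (Φ.symm (c, z)).1 = x₀) : Y ≃ₜ Y' where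
  toFun y := (Φ (x₀, y)).2
  invFun z := (Φ.symm (c, z)).2
  left_inv y := by
    have hΦ : Φ (x₀, y) = (c, (Φ (x₀, y)).2) := Prod.ext (h₁ y) rfl
    simp [← hΦ]
  right_inv z := by
    have hΦ : Φ.symm (c, z) = (x₀, (Φ.symm (c, z)).2) := Prod.ext (h₂ z) rfl
    simp [← hΦ]
  continuous_toFun := by fun_prop
  continuous_invFun := by fun_prop

theorem IsC1TorusMap.isC1CircleMap_snd {F : 𝕋 × 𝕋 → 𝕋 × 𝕋} (hF : IsC1TorusMap F) (x : 𝕋) :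
    IsC1CircleMap fun y => (F (x, y)).2 := by
  obtain ⟨F', hF', hlift⟩ := hF
  obtain ⟨r, rfl⟩ := QuotientAddGroup.mk_surjective x
  exact ⟨fun t => (F' (r, t)).2, (hF'.comp (contDiff_const.prodMk contDiff_id)).snd,
    fun t => congrArg Prod.snd (hlift (r, t))⟩

section Fibered

variable {α β : ℝ} {g : 𝕋 → 𝕋}

theorem semiconj_prodMap_id_of_tendsto (H : 𝕋 ≃ₜ 𝕋) (hH : Semiconj H (· + (β : 𝕋)) g)
    {ι : Type*} {l : Filter ι} [l.NeBot] {m : ι → ℕ}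
    (hmα : Tendsto (fun k => m k • (α : 𝕋)) l (𝓝 0))
    (hmβ : Tendsto (fun k => m k • (β : 𝕋)) l (𝓝 β)) {F : 𝕋 × 𝕋 → 𝕋 × 𝕋} (hF : Continuous F)
    (hFT : Semiconj F (Prod.map (· + (α : 𝕋)) (· + (β : 𝕋))) (Prod.map (· + (α : 𝕋)) g)) :
    Semiconj F (Prod.map id (· + (β : 𝕋))) (Prod.map id g) := by
  have hα : ∀ x : 𝕋, Tendsto (fun k => (· + (α : 𝕋))^[m k] x) l (𝓝 x) := fun x => by
    simpa using tendsto_add_right_iterate hmα x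
  have hβ := tendsto_add_right_iterate hmβ
  refine hFT.of_tendsto_iterate hF (l := l) (m := m) (fun ⟨x, y⟩ => ?_) (fun ⟨x, z⟩ => ?_)
  · simpa only [Prod.map_iterate, Prod.map_apply, id_eq] using (hα x).prodMk_nhds (hβ y)
  · have hg := hH.tendsto_iterate_right H hβ z
    rw [hH.eq, H.apply_symm_apply] at hg
    simpa only [Prod.map_iterate, Prod.map_apply, id_eq] using (hα x).prodMk_nhds hg

theorem exists_fst_eq_of_semiconj_prodMap_id (H : 𝕋 ≃ₜ 𝕋) (hH : Semiconj H (· + (β : 𝕋)) g)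
    (hβ : Irrational β) (F : 𝕋 × 𝕋 ≃ₜ 𝕋 × 𝕋)
    (hF : Semiconj F (Prod.map id (· + (β : 𝕋))) (Prod.map id g)) :
    ∃ c, (∀ y, (F (0, y)).1 = c) ∧ ∀ z, (F.symm (c, z)).1 = 0 := by
  have hFsymm : Semiconj F.symm (Prod.map id g) (Prod.map id (· + (β : 𝕋))) :=
    hF.inverse_left F.left_inv F.right_inv
  refine ⟨(F (0, 0)).1, AddCircle.apply_eq_apply_zero_of_periodic hβ (f := fun y => (F (0, y)).1)
    (by fun_prop) (fun y => by simpa using congrArg Prod.fst (hF (0, y))), fun z => ?_⟩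
  have hinv := AddCircle.apply_eq_of_semiconj hβ H hH (f := fun z => (F.symm ((F (0, 0)).1, z)).1)
    (by fun_prop) (fun z => by simpa using congrArg Prod.fst (hFsymm (_, z))) z (F (0, 0)).2
  simpa using hinv

end Fibered

theorem stmt6_general (α β : ℝ) (hβ : Irrational β)
    (q : ℕ → ℕ)
    (hqβ : Tendsto (fun n => ‖(((q n : ℝ) * β : ℝ) : AddCircle (1 : ℝ))‖) atTop (nhds 0))
    (nk : ℕ → ℕ) (hnk : StrictMono nk)
    (hqα : Tendsto (fun k => ‖((((q (nk k) : ℝ) + 1) * α : ℝ) : AddCircle (1 : ℝ))‖) atTop (nhds 0))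
    (g H : AddCircle (1 : ℝ) ≃ₜ AddCircle (1 : ℝ))
    (hconj : ∀ y : AddCircle (1 : ℝ), H (y + (β : AddCircle (1 : ℝ))) = g (H y))
    (hnoC1 : ¬ ∃ H' : AddCircle (1 : ℝ) ≃ₜ AddCircle (1 : ℝ),
      IsC1CircleMap H' ∧ IsC1CircleMap H'.symm ∧
        ∀ y : AddCircle (1 : ℝ), H' (y + (β : AddCircle (1 : ℝ))) = g (H' y))
    (T₁ T₂ : AddCircle (1 : ℝ) × AddCircle (1 : ℝ) → AddCircle (1 : ℝ) × AddCircle (1 : ℝ))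
    (hT₁ : ∀ p, T₁ p = (p.1 + (α : AddCircle (1 : ℝ)), p.2 + (β : AddCircle (1 : ℝ))))
    (hT₂ : ∀ p, T₂ p = (p.1 + (α : AddCircle (1 : ℝ)), g p.2)) :
    ¬ ∃ F : AddCircle (1 : ℝ) × AddCircle (1 : ℝ) ≃ₜ AddCircle (1 : ℝ) × AddCircle (1 : ℝ),
      IsC1TorusMap F ∧ IsC1TorusMap F.symm ∧ ∀ p, F (T₁ p) = T₂ (F p) := by
  rintro ⟨F, hF, hFsymm, hFT⟩
  have hT₁ : T₁ = Prod.map (· + (α : 𝕋)) (· + (β : 𝕋)) := funext hT₁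
  have hT₂ : T₂ = Prod.map (· + (α : 𝕋)) g := funext hT₂
  have hqα : Tendsto (fun k => (q (nk k) + 1) • (α : 𝕋)) atTop (𝓝 0) :=
    AddCircle.tendsto_nsmul_coe_zero (by simpa using hqα)
  have hqβ : Tendsto (fun k => (q (nk k) + 1) • (β : 𝕋)) atTop (𝓝 β) := by
    simpa [succ_nsmul] using
      (AddCircle.tendsto_nsmul_coe_zero (hqβ.comp hnk.tendsto_atTop)).add_const (β : 𝕋)
  have hfib := semiconj_prodMap_id_of_tendsto H hconj hqα hqβ F.continuous (hT₁ ▸ hT₂ ▸ hFT)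
  obtain ⟨c, h₁, h₂⟩ := exists_fst_eq_of_semiconj_prodMap_id H hconj hβ F hfib
  exact hnoC1 ⟨F.sliceSnd h₁ h₂, hF.isC1CircleMap_snd 0, hFsymm.isC1CircleMap_snd c,
    fun y => congrArg Prod.snd (hfib (0, y))⟩

/-- Let `β` be irrational with continued-fraction denominators `(q n)` (so that
`q_n β → 0 (mod 1)`), and let `g` be a circle homeomorphism conjugate to `R_β` via a
homeomorphism `H` (`H ∘ R_β = g ∘ H`), such that no `C¹` conjugacy between `R_β` and `g`
exists.  Let `α` be an irrational Diophantine number with `(q_{n_k}+1) α → 0 (mod 1)`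
along a diverging subsequence `(n_k)`.  Then there is no `C¹` diffeomorphism of the
2-torus conjugating `T₁ = R_α × R_β` to `T₂ = R_α × g`. -/
theorem stmt6 (α β : ℝ) (hα : Irrational α) (hβ : Irrational β)
    (hdioph : ∃ C > (0 : ℝ), ∃ τ > (1 : ℝ), ∀ n : ℕ, 1 ≤ n →
      C * (n : ℝ) ^ (-τ) ≤ ‖(((n : ℝ) * α : ℝ) : AddCircle (1 : ℝ))‖)
    (q : ℕ → ℕ) (hqpos : ∀ n, 0 < q n) (hqmono : StrictMono q)
    (hqβ : Tendsto (fun n => ‖(((q n : ℝ) * β : ℝ) : AddCircle (1 : ℝ))‖) atTop (nhds 0))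
    (nk : ℕ → ℕ) (hnk : StrictMono nk)
    (hqα : Tendsto (fun k => ‖((((q (nk k) : ℝ) + 1) * α : ℝ) : AddCircle (1 : ℝ))‖) atTop (nhds 0))
    (g H : AddCircle (1 : ℝ) ≃ₜ AddCircle (1 : ℝ))
    (hconj : ∀ y : AddCircle (1 : ℝ), H (y + (β : AddCircle (1 : ℝ))) = g (H y))
    (hnoC1 : ¬ ∃ H' : AddCircle (1 : ℝ) ≃ₜ AddCircle (1 : ℝ),
      IsC1CircleMap H' ∧ IsC1CircleMap H'.symm ∧
        ∀ y : AddCircle (1 : ℝ), H' (y + (β : AddCircle (1 : ℝ))) = g (H' y))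
    (T₁ T₂ : AddCircle (1 : ℝ) × AddCircle (1 : ℝ) → AddCircle (1 : ℝ) × AddCircle (1 : ℝ))
    (hT₁ : ∀ p, T₁ p = (p.1 + (α : AddCircle (1 : ℝ)), p.2 + (β : AddCircle (1 : ℝ))))
    (hT₂ : ∀ p, T₂ p = (p.1 + (α : AddCircle (1 : ℝ)), g p.2)) :
    ¬ ∃ F : AddCircle (1 : ℝ) × AddCircle (1 : ℝ) ≃ₜ AddCircle (1 : ℝ) × AddCircle (1 : ℝ),
      IsC1TorusMap F ∧ IsC1TorusMap F.symm ∧ ∀ p, F (T₁ p) = T₂ (F p) :=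
  stmt6_general α β hβ q hqβ nk hnk hqα g H hconj hnoC1 T₁ T₂ hT₁ hT₂
end

section
/- There exist irrational numbers α (Diophantine) and β (Liouville) such that, writing (q_n) for the denominators of β, there exists a diverging subsequence (n_k) with ‖(q_{n_k}+1)α‖_ℤ → 0. -/
/-!
Take `α = √2`: since `(n√2 - m)(n√2 + m) = 2n² - m²` is a nonzero integer, `‖n√2‖ ≥ 1 / (4n)`.

Build `β` from its partial quotients. Given the denominators `q_{n-1}, q_n`, the multiples
`a · q_n√2` with `a` beyond any bound are still dense modulo `1`, so `a_{n+1}` can be chosen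
larger than `q_n ^ n` with `‖(a_{n+1} q_n + q_{n-1} + 1)√2‖ < 1 / (n + 1)`, i.e.
`‖(q_{n+1} + 1)√2‖ → 0`. The bound `|β - p_n / q_n| ≤ 1 / (q_n q_{n+1})` and the fast growth
of the `q_n` make `β` Liouville. The infinite continued fraction with all partial quotients
`≥ 2` converges because each step `x ↦ a + x⁻¹` contracts by `1 / 4` on `[2, ∞)`.
-/

open Filter Topology

lemma UnitAddCircle.norm_coe_le_abs_sub_intCast (x : ℝ) (m : ℤ) :
    ‖(x : UnitAddCircle)‖ ≤ |x - m| :=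
  UnitAddCircle.norm_eq ▸ round_le x m

lemma one_div_four_mul_le_norm_nat_mul_sqrt_two {n : ℕ} (hn : 1 ≤ n) :
    1 / (4 * n) ≤ ‖((n * √2 : ℝ) : UnitAddCircle)‖ := by
  rw [UnitAddCircle.norm_eq]
  set m := round ((n : ℝ) * √2)
  have hirr : Irrational ((n : ℝ) * √2) :=
    irrational_natCast_mul_iff.mpr ⟨by omega, irrational_sqrt_two⟩
  have hdiff : (n : ℝ) * √2 - m ≠ 0 := sub_ne_zero.mpr (hirr.ne_int m)
  have hsum : (n : ℝ) * √2 + m ≠ 0 := by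
    simpa [sub_eq_add_neg] using sub_ne_zero.mpr (hirr.ne_int (-m))
  have hprod : ((n : ℝ) * √2 - m) * ((n : ℝ) * √2 + m) = ((2 * n ^ 2 - m ^ 2 : ℤ) : ℝ) := by
    push_cast
    ring_nf
    rw [Real.sq_sqrt zero_le_two]
  have hone : 1 ≤ |((n : ℝ) * √2 - m) * ((n : ℝ) * √2 + m)| := by
    rw [hprod]
    exact_mod_cast Int.one_le_abs (by exact_mod_cast hprod ▸ mul_ne_zero hdiff hsum)
  have hsqrt : √2 < 3 / 2 := by
    rw [Real.sqrt_lt' (by norm_num)]; norm_num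
  have hn' : (1 : ℝ) ≤ n := by exact_mod_cast hn
  have hsum_le : |(n : ℝ) * √2 + m| ≤ 4 * n := by
    have := abs_sub_round ((n : ℝ) * √2)
    calc |(n : ℝ) * √2 + m| = |2 * ((n : ℝ) * √2) - ((n : ℝ) * √2 - m)| := by ring_nf
      _ ≤ |2 * ((n : ℝ) * √2)| + |(n : ℝ) * √2 - m| := abs_sub _ _
      _ ≤ 4 * n := by
        rw [abs_of_nonneg (by positivity)]
        nlinarith
  rw [div_le_iff₀ (by positivity)]
  calc 1 ≤ |(n : ℝ) * √2 - m| * |(n : ℝ) * √2 + m| := by rwa [abs_mul] at hone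
    _ ≤ |(n : ℝ) * √2 - m| * (4 * n) := by gcongr
    _ = _ := by ring

lemma sqrt_two_diophantine :
    ∃ C > (0 : ℝ), ∃ τ > (1 : ℝ), ∀ n : ℕ, 1 ≤ n →
      C * (n : ℝ) ^ (-τ) ≤ ‖(((n : ℝ) * √2 : ℝ) : AddCircle (1 : ℝ))‖ := by
  refine ⟨1 / 4, by norm_num, 2, by norm_num, fun n hn => ?_⟩
  refine le_trans ?_ (one_div_four_mul_le_norm_nat_mul_sqrt_two hn)
  have hn' : (1 : ℝ) ≤ n := by exact_mod_cast hn
  calc 1 / 4 * (n : ℝ) ^ (-2 : ℝ) = 1 / (4 * n ^ 2) := by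
        rw [Real.rpow_neg (by positivity), Real.rpow_two]; ring
    _ ≤ 1 / (4 * n) := by gcongr; nlinarith

lemma exists_nat_int_abs_mul_add_sub_lt {ψ : ℝ} (hψ : ψ ≠ 0) (u : ℝ) :
    ∃ c : ℕ, ∃ m : ℤ, |c * ψ + m - u| < |ψ| := by
  obtain ⟨m, hm⟩ : ∃ m : ℤ, 0 ≤ (u - m) / ψ := by
    rcases hψ.lt_or_gt with hneg | hpos
    · exact ⟨⌈u⌉, div_nonneg_of_nonpos (by linarith [Int.le_ceil u]) hneg.le⟩
    · exact ⟨⌊u⌋, div_nonneg (by linarith [Int.floor_le u]) hpos.le⟩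
  set r := (u - m) / ψ
  refine ⟨⌈r⌉₊, m, ?_⟩
  have hr : ⌈r⌉₊ * ψ + m - u = (⌈r⌉₊ - r) * ψ := by
    simp only [r]; field_simp; ring
  rw [hr, abs_mul, abs_of_nonneg (by linarith [Nat.le_ceil r])]
  exact mul_lt_of_lt_one_left (abs_pos.mpr hψ) (by linarith [Nat.ceil_lt_add_one hm])

lemma Irrational.exists_nat_ge_norm_mul_add_lt {θ : ℝ} (hθ : Irrational θ) (t : ℝ) {ε : ℝ}
    (hε : 0 < ε) (A : ℕ) : ∃ a : ℕ, A ≤ a ∧ ‖((a * θ + t : ℝ) : UnitAddCircle)‖ < ε := by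
  obtain ⟨N, hN⟩ := exists_nat_gt ε⁻¹
  have hN₀ : 0 < N := by exact_mod_cast (inv_pos.mpr hε).trans hN
  obtain ⟨j, hj₀, -, hj⟩ := Real.exists_nat_abs_mul_sub_round_le θ hN₀
  set ψ := j * θ - round (j * θ)
  have hψ : ψ ≠ 0 :=
    sub_ne_zero.mpr ((irrational_natCast_mul_iff.mpr ⟨hj₀.ne', hθ⟩).ne_int _)
  have hψε : |ψ| < ε := by
    refine hj.trans_lt ?_
    rw [div_lt_iff₀ (by positivity)]
    have := (inv_lt_iff_one_lt_mul₀ hε).mp hN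
    linarith
  obtain ⟨c, m, hcm⟩ := exists_nat_int_abs_mul_add_sub_lt hψ (-(A * θ + t))
  refine ⟨A + c * j, Nat.le_add_right _ _, ?_⟩
  calc ‖(((A + c * j : ℕ) * θ + t : ℝ) : UnitAddCircle)‖
      ≤ |(A + c * j : ℕ) * θ + t - (c * round (j * θ) - m : ℤ)| :=
        UnitAddCircle.norm_coe_le_abs_sub_intCast _ _
    _ = |c * ψ + m - -(A * θ + t)| := by simp only [ψ]; push_cast; ring_nf
    _ < ε := hcm.trans hψε

/-- `finiteContFract a m n` is the value of `[a n; a (n + 1), …, a (n + m)]`. -/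
noncomputable def finiteContFract (a : ℕ → ℕ) : ℕ → ℕ → ℝ
  | 0, n => a n
  | m + 1, n => a n + (finiteContFract a m (n + 1))⁻¹

noncomputable def contFractTail (a : ℕ → ℕ) (n : ℕ) : ℝ :=
  limUnder atTop fun m => finiteContFract a m n

section ContFractTail

variable {a : ℕ → ℕ} (ha : ∀ n, 2 ≤ a n)
include ha

lemma two_le_finiteContFract (m n : ℕ) : 2 ≤ finiteContFract a m n := by
  induction m generalizing n with
  | zero => show (2 : ℝ) ≤ a n; exact_mod_cast ha n
  | succ m ih =>
    have := inv_pos.mpr ((zero_lt_two' ℝ).trans_le (ih (n + 1)))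
    have : (2 : ℝ) ≤ a n := by exact_mod_cast ha n
    simp only [finiteContFract]; linarith

lemma abs_finiteContFract_succ_sub_le (m n : ℕ) :
    |finiteContFract a (m + 1) n - finiteContFract a m n| ≤ (1 / 4) ^ m := by
  induction m generalizing n with
  | zero =>
    have : (2 : ℝ) ≤ a (n + 1) := by exact_mod_cast ha (n + 1)
    simp only [finiteContFract, add_sub_cancel_left, pow_zero]
    rw [abs_of_pos (by positivity)]
    exact inv_le_one_of_one_le₀ (by linarith)
  | succ m ih =>
    set x := finiteContFract a (m + 1) (n + 1)
    set y := finiteContFract a m (n + 1)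
    have hx := two_le_finiteContFract ha (m + 1) (n + 1)
    have hy := two_le_finiteContFract ha m (n + 1)
    calc |finiteContFract a (m + 2) n - finiteContFract a (m + 1) n|
        = |x - y| / (x * y) := by
          show |(a n + x⁻¹) - (a n + y⁻¹)| = _
          rw [add_sub_add_left_eq_sub, inv_sub_inv (by positivity) (by positivity), abs_div,
            abs_sub_comm, abs_of_pos (by positivity : 0 < x * y)]
      _ ≤ (1 / 4) ^ m / 4 :=
          div_le_div₀ (by positivity) (ih (n + 1)) (by norm_num) (by nlinarith)
      _ = (1 / 4) ^ (m + 1) := by ring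

lemma tendsto_finiteContFract (n : ℕ) :
    Tendsto (fun m => finiteContFract a m n) atTop (𝓝 (contFractTail a n)) :=
  CauchySeq.tendsto_limUnder <| cauchySeq_of_le_geometric (1 / 4) 1 (by norm_num) fun m => by
    simpa [Real.dist_eq, abs_sub_comm] using abs_finiteContFract_succ_sub_le ha m n

lemma two_le_contFractTail (n : ℕ) : 2 ≤ contFractTail a n :=
  ge_of_tendsto' (tendsto_finiteContFract ha n) fun m => two_le_finiteContFract ha m n

lemma contFractTail_eq (n : ℕ) : contFractTail a n = a n + (contFractTail a (n + 1))⁻¹ :=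
  tendsto_nhds_unique ((tendsto_finiteContFract ha n).comp (tendsto_add_atTop_nat 1))
    (tendsto_const_nhds.add ((tendsto_finiteContFract ha (n + 1)).inv₀
      (by linarith [two_le_contFractTail ha (n + 1)])))

lemma floor_contFractTail (n : ℕ) : ⌊contFractTail a n⌋ = a n := by
  have hpos := inv_pos.mpr ((zero_lt_two' ℝ).trans_le (two_le_contFractTail ha (n + 1)))
  have hlt : (contFractTail a (n + 1))⁻¹ < 1 :=
    inv_lt_one_of_one_lt₀ (by linarith [two_le_contFractTail ha (n + 1)])
  rw [Int.floor_eq_iff, contFractTail_eq ha]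
  push_cast
  constructor <;> linarith

lemma fract_contFractTail (n : ℕ) :
    Int.fract (contFractTail a n) = (contFractTail a (n + 1))⁻¹ := by
  rw [Int.fract, floor_contFractTail ha, contFractTail_eq ha]
  push_cast
  ring

lemma of_contFractTail_s_get? (n k : ℕ) :
    (GenContFract.of (contFractTail a k)).s.get? n = some ⟨1, (a (k + n + 1) : ℝ)⟩ := by
  induction n generalizing k with
  | zero =>
    have hfract : Int.fract (contFractTail a k) ≠ 0 := by
      rw [fract_contFractTail ha]
      linarith [inv_pos.mpr ((zero_lt_two' ℝ).trans_le (two_le_contFractTail ha (k + 1)))]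
    rw [← Stream'.Seq.head, GenContFract.of_s_head hfract, fract_contFractTail ha, inv_inv,
      floor_contFractTail ha]
    simp
  | succ n ih =>
    rw [GenContFract.of_s_succ, fract_contFractTail ha, inv_inv, ih]
    ring_nf

theorem GenContFract.exists_of_s_get?_eq :
    ∃ β : ℝ, ∀ n, (GenContFract.of β).s.get? n = some ⟨1, (a (n + 1) : ℝ)⟩ :=
  ⟨contFractTail a 0, fun n => by simpa using of_contFractTail_s_get? ha n 0⟩

end ContFractTail

section PrescribedPartialQuotients

open GenContFract

variable {β : ℝ} {a : ℕ → ℕ}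
  (hs : ∀ n, (GenContFract.of β).s.get? n = some ⟨1, (a (n + 1) : ℝ)⟩)
include hs

lemma GenContFract.not_terminatedAt_of_s_get?_eq (n : ℕ) :
    ¬(GenContFract.of β).TerminatedAt n := by
  simp [terminatedAt_iff_s_none, hs n]

lemma GenContFract.irrational_of_s_get?_eq : Irrational β := by
  rintro ⟨r, hr⟩
  obtain ⟨n, hn⟩ := (terminates_iff_rat β).mpr ⟨r, hr.symm⟩
  exact not_terminatedAt_of_s_get?_eq hs n hn

lemma GenContFract.dens_eq_of_s_get?_eq {q : ℕ → ℕ} (h₀ : q 0 = 1) (h₁ : q 1 = a 1)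
    (hrec : ∀ n, q (n + 2) = a (n + 2) * q (n + 1) + q n) (n : ℕ) :
    (GenContFract.of β).dens n = q n := by
  induction n using Nat.twoStepInduction with
  | zero => simp [h₀]
  | one => rw [first_den_eq (hs 0), h₁]
  | more n ih₀ ih₁ =>
    rw [dens_recurrence (hs (n + 1)) ih₀ ih₁, hrec]
    push_cast; ring

lemma GenContFract.exists_int_nums_eq_of_s_get?_eq (n : ℕ) :
    ∃ p : ℤ, (GenContFract.of β).nums n = p := by
  induction n using Nat.twoStepInduction with
  | zero => exact ⟨⌊β⌋, by rw [zeroth_num_eq_h, of_h_eq_floor]⟩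
  | one => exact ⟨a 1 * ⌊β⌋ + 1, by rw [first_num_eq (hs 0), of_h_eq_floor]; push_cast; ring⟩
  | more n ih₀ ih₁ =>
    obtain ⟨p₀, hp₀⟩ := ih₀
    obtain ⟨p₁, hp₁⟩ := ih₁
    exact ⟨a (n + 2) * p₁ + p₀, by rw [nums_recurrence (hs (n + 1)) hp₀ hp₁]; push_cast; ring⟩

lemma GenContFract.liouville_of_s_get?_eq {q : ℕ → ℕ} (h₀ : q 0 = 1) (h₁ : q 1 = a 1)
    (hrec : ∀ n, q (n + 2) = a (n + 2) * q (n + 1) + q n) (hq : ∀ n, 1 < q (n + 1))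
    (hgrowth : ∀ n, q (n + 1) ^ n < q (n + 2)) : Liouville β := by
  intro n
  have hden := dens_eq_of_s_get?_eq hs h₀ h₁ hrec
  obtain ⟨p, hp⟩ := exists_int_nums_eq_of_s_get?_eq hs (n + 1)
  refine ⟨p, q (n + 1), by exact_mod_cast hq n, ?_, ?_⟩
  · exact fun h => irrational_of_s_get?_eq hs ⟨p / q (n + 1), by push_cast; exact h.symm⟩
  have hqpos : (0 : ℝ) < q (n + 1) := by exact_mod_cast (hq n).trans' one_pos
  have hlt : (q (n + 1) : ℝ) ^ n < q (n + 1) * q (n + 2) := by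
    exact_mod_cast (hgrowth n).trans_le (Nat.le_mul_of_pos_left _ (hq n).le)
  calc |β - (p : ℝ) / ((q (n + 1) : ℤ) : ℝ)| = |β - (GenContFract.of β).convs (n + 1)| := by
        rw [conv_eq_num_div_den, hp, hden]; rfl
    _ ≤ 1 / (q (n + 1) * q (n + 2)) := by
        simpa only [hden] using abs_sub_convs_le (not_terminatedAt_of_s_get?_eq hs (n + 1))
    _ < 1 / (q (n + 1) : ℤ) ^ n := by
        push_cast
        exact one_div_lt_one_div_of_lt (by positivity) hlt

end PrescribedPartialQuotients

namespace ResonantLiouville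

/-- `q' = q_{n-1}` and `q = q_n` are the last two denominators, so `c * q + q'` is the next one. -/
noncomputable def nextPartialQuot (n q q' : ℕ) : ℕ :=
  Classical.epsilon fun c =>
    q ^ n + 2 ≤ c ∧ ‖(((((c * q + q' : ℕ) : ℝ) + 1) * √2 : ℝ) : UnitAddCircle)‖ < 1 / (n + 1)

lemma nextPartialQuot_spec (n : ℕ) {q : ℕ} (hq : 0 < q) (q' : ℕ) :
    q ^ n + 2 ≤ nextPartialQuot n q q' ∧
      ‖(((((nextPartialQuot n q q' * q + q' : ℕ) : ℝ) + 1) * √2 : ℝ) : UnitAddCircle)‖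
        < 1 / (n + 1) := by
  have hθ : Irrational (q * √2) := irrational_natCast_mul_iff.mpr ⟨hq.ne', irrational_sqrt_two⟩
  obtain ⟨c, hc, hnorm⟩ :=
    hθ.exists_nat_ge_norm_mul_add_lt ((q' + 1) * √2) Nat.one_div_pos_of_nat (q ^ n + 2)
  refine Classical.epsilon_spec (p := fun c => q ^ n + 2 ≤ c ∧ _) ⟨c, hc, ?_⟩
  convert hnorm using 4
  push_cast
  ring

/-- The state `(a n, q n, q (n - 1))` of the construction, with `q (-1) = 0`. -/
noncomputable def state : ℕ → ℕ × ℕ × ℕ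
  | 0 => (2, 1, 0)
  | n + 1 =>
    let c := nextPartialQuot n (state n).2.1 (state n).2.2
    (c, c * (state n).2.1 + (state n).2.2, (state n).2.1)

noncomputable def partialQuot (n : ℕ) : ℕ := (state n).1

noncomputable def den (n : ℕ) : ℕ := (state n).2.1

lemma den_zero : den 0 = 1 := rfl

lemma den_one : den 1 = partialQuot 1 := by simp [den, partialQuot, state]

lemma den_add_two (n : ℕ) : den (n + 2) = partialQuot (n + 2) * den (n + 1) + den n := rfl

lemma den_pos (n : ℕ) : 0 < den n := by
  induction n with
  | zero => exact Nat.one_pos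
  | succ n ih =>
    exact Nat.add_pos_left (Nat.mul_pos
      ((nextPartialQuot_spec n ih _).1.trans_lt' (by positivity)) ih) _

lemma partialQuot_succ_spec (n : ℕ) :
    den n ^ n + 2 ≤ partialQuot (n + 1) ∧
      ‖((((den (n + 1) : ℝ) + 1) * √2 : ℝ) : UnitAddCircle)‖ < 1 / (n + 1) :=
  nextPartialQuot_spec n (den_pos n) _

lemma two_le_partialQuot (n : ℕ) : 2 ≤ partialQuot n := by
  cases n with
  | zero => exact le_rfl
  | succ n => exact (partialQuot_succ_spec n).1.trans' (Nat.le_add_left _ _)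

lemma partialQuot_mul_den_le_den_succ (n : ℕ) : partialQuot (n + 1) * den n ≤ den (n + 1) :=
  Nat.le_add_right _ _

lemma one_lt_den_succ (n : ℕ) : 1 < den (n + 1) :=
  (partialQuot_mul_den_le_den_succ n).trans_lt' (Nat.mul_le_mul (two_le_partialQuot _) (den_pos n))

lemma den_pow_lt_den (n : ℕ) : den (n + 1) ^ n < den (n + 2) :=
  calc den (n + 1) ^ n ≤ den (n + 1) ^ (n + 1) := Nat.pow_le_pow_right (den_pos _) n.le_succ
    _ < partialQuot (n + 2) := by linarith [(partialQuot_succ_spec (n + 1)).1]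
    _ ≤ partialQuot (n + 2) * den (n + 1) := Nat.le_mul_of_pos_right _ (den_pos _)
    _ ≤ den (n + 2) := partialQuot_mul_den_le_den_succ _

end ResonantLiouville

/-- There exist a Diophantine irrational `α` and a Liouville number `β` such that, writing
`(q n)` for the denominators of the continued fraction expansion of `β`, there is a
diverging subsequence `(n_k)` with `‖(q_{n_k} + 1) α‖_ℤ → 0`. -/
theorem stmt8 :
    ∃ α β : ℝ, Irrational α ∧ Irrational β ∧
      (∃ C > (0 : ℝ), ∃ τ > (1 : ℝ), ∀ n : ℕ, 1 ≤ n →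
        C * (n : ℝ) ^ (-τ) ≤ ‖(((n : ℝ) * α : ℝ) : AddCircle (1 : ℝ))‖) ∧
      Liouville β ∧
      ∃ nk : ℕ → ℕ, StrictMono nk ∧
        Tendsto (fun k =>
            ‖((((GenContFract.of β).dens (nk k) + 1) * α : ℝ) : AddCircle (1 : ℝ))‖)
          atTop (nhds 0) := by
  open ResonantLiouville in
  obtain ⟨β, hβ⟩ := GenContFract.exists_of_s_get?_eq two_le_partialQuot
  have hden := GenContFract.dens_eq_of_s_get?_eq hβ den_zero den_one den_add_two
  refine ⟨√2, β, irrational_sqrt_two, GenContFract.irrational_of_s_get?_eq hβ,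
    sqrt_two_diophantine, GenContFract.liouville_of_s_get?_eq hβ den_zero den_one den_add_two
      one_lt_den_succ den_pow_lt_den, (· + 1), strictMono_id.add_const 1, ?_⟩
  refine squeeze_zero (fun _ => norm_nonneg _) (fun k => ?_)
    tendsto_one_div_add_atTop_nhds_zero_nat
  rw [hden]
  exact (partialQuot_succ_spec k).2.le
end

section
/- (Time changes and cohomology) Let φ : ℝ × M → M be a smooth flow on a compact manifold M, and f, g : M → ℝ continuous positive functions. Suppose u : M → ℝ is a continuous function satisfying u(φ_t(x)) − u(x) = ∫₀ᵗ (f − g)(φ_s(x)) ds for all x ∈ M, t ∈ ℝ. Then the time-changed flows φ^f and φ^g are topologically conjugate. -/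
open MeasureTheory intervalIntegral

namespace TimeChangeAux

variable {M : Type*} [MetricSpace M]

/-- The "stretched time" integral `G x a = ∫₀ᵃ g(φ_s x) ds`. -/
noncomputable def G (φ : Flow ℝ M) (g : M → ℝ) (x : M) (a : ℝ) : ℝ :=
  ∫ s in (0:ℝ)..a, g (φ s x)

lemma intable (φ : Flow ℝ M) {g : M → ℝ} (hg : Continuous g) (x : M) (a b : ℝ) :
    IntervalIntegrable (fun s => g (φ s x)) volume a b :=
  (hg.comp (φ.continuous continuous_id continuous_const)).intervalIntegrable a b

lemma G_strictMono (φ : Flow ℝ M) {g : M → ℝ} (hg : Continuous g)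
    (hgpos : ∀ x, 0 < g x) (x : M) : StrictMono (G φ g x) := by
  intro a b hab
  have hpos : 0 < ∫ s in a..b, g (φ s x) :=
    intervalIntegral_pos_of_pos (intable φ hg x a b) (fun s => hgpos _) hab
  have hsub : G φ g x b - G φ g x a = ∫ s in a..b, g (φ s x) :=
    integral_interval_sub_left (intable φ hg x 0 b) (intable φ hg x 0 a)
  linarith

lemma G_inj (φ : Flow ℝ M) {g : M → ℝ} (hg : Continuous g)
    (hgpos : ∀ x, 0 < g x) (x : M) : Function.Injective (G φ g x) :=
  (G_strictMono φ hg hgpos x).injective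

/-- Cocycle property of `G` under the flow. -/
lemma G_shift (φ : Flow ℝ M) {g : M → ℝ} (hg : Continuous g) (x : M) (a b : ℝ) :
    G φ g x (a + b) = G φ g x a + G φ g (φ a x) b := by
  have h1 : G φ g x (a + b) = G φ g x a + ∫ s in a..(a + b), g (φ s x) := by
    rw [G, G, ← integral_add_adjacent_intervals (intable φ hg x 0 a) (intable φ hg x a (a + b))]
  have h2 : G φ g (φ a x) b = ∫ s in a..(a + b), g (φ s x) := by
    have := integral_comp_add_right (a := (0:ℝ)) (b := b) (fun s => g (φ s x)) a
    rw [G]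
    calc (∫ s in (0:ℝ)..b, g (φ s (φ a x)))
        = ∫ s in (0:ℝ)..b, g (φ (s + a) x) := by
          refine integral_congr fun s _ => ?_
          rw [← φ.map_add, add_comm]
      _ = ∫ s in (0 + a)..(b + a), g (φ s x) := this
      _ = ∫ s in a..(a + b), g (φ s x) := by rw [zero_add, add_comm b a]
  rw [h1, h2]

set_option maxHeartbeats 1000000 in
lemma cont_w (φ : Flow ℝ M) {g : M → ℝ} (hg : Continuous g) (hgpos : ∀ x, 0 < g x)
    (w : M → ℝ → ℝ) (hw : ∀ x t, G φ g x (w x t) = t)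
    (v : M → ℝ) (hv : Continuous v) : Continuous fun x => w x (v x) := by
  rw [continuous_iff_continuousAt]
  intro x₀
  rw [ContinuousAt, Metric.tendsto_nhds]
  intro ε hε
  set c₀ := w x₀ (v x₀) with hc₀
  have hGc₀ : G φ g x₀ c₀ = v x₀ := by rw [hc₀]; exact hw x₀ (v x₀)
  have huc : Continuous (Function.uncurry fun (x : M) (t : ℝ) => g (φ t x)) :=
    hg.comp (φ.continuous continuous_snd continuous_fst)
  have hc1 : Continuous fun x : M => G φ g x (c₀ + ε) :=
    continuous_parametric_intervalIntegral_of_continuous' huc 0 (c₀ + ε)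
  have hc2 : Continuous fun x : M => G φ g x (c₀ - ε) :=
    continuous_parametric_intervalIntegral_of_continuous' huc 0 (c₀ - ε)
  have hSopen : IsOpen {x : M | v x < G φ g x (c₀ + ε) ∧ G φ g x (c₀ - ε) < v x} :=
    (isOpen_lt hv hc1).inter (isOpen_lt hc2 hv)
  have hx₀ : x₀ ∈ {x : M | v x < G φ g x (c₀ + ε) ∧ G φ g x (c₀ - ε) < v x} := by
    have h1 := (G_strictMono φ hg hgpos x₀) (show c₀ < c₀ + ε by linarith)
    have h2 := (G_strictMono φ hg hgpos x₀) (show c₀ - ε < c₀ by linarith)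
    exact ⟨by linarith, by linarith⟩
  filter_upwards [hSopen.mem_nhds hx₀] with x hx
  rw [Real.dist_eq, abs_sub_lt_iff]
  constructor
  · have h1 : G φ g x (w x (v x)) < G φ g x (c₀ + ε) := by rw [hw]; exact hx.1
    have := (G_strictMono φ hg hgpos x).lt_iff_lt.mp h1
    linarith
  · have h2 : G φ g x (c₀ - ε) < G φ g x (w x (v x)) := by rw [hw]; exact hx.2
    have := (G_strictMono φ hg hgpos x).lt_iff_lt.mp h2
    linarith

end TimeChangeAux

open TimeChangeAux

/-- (Time changes and cohomology) Let `φ` be a continuous flow on a compact metric space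
`M`, let `f, g` be continuous positive functions on `M`, and let `φ^f, φ^g` be the
corresponding time changes, defined by `φ^f_t(x) = φ_{w_f(x,t)}(x)` where `w_f` is the
unique function with `∫₀^{w_f(x,t)} f(φ_u(x)) du = t`.  If `u : M → ℝ` is a continuous
solution of the cohomological equation
`u(φ_t(x)) − u(x) = ∫₀ᵗ (f − g)(φ_s(x)) ds`, then `φ^f` and `φ^g` are topologically
conjugate. -/
theorem stmt9 {M : Type*} [MetricSpace M] [CompactSpace M]
    (φ : Flow ℝ M) (f g : M → ℝ) (hf : Continuous f) (hg : Continuous g)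
    (hfpos : ∀ x, 0 < f x) (hgpos : ∀ x, 0 < g x)
    (wf wg : M → ℝ → ℝ)
    (hwf : ∀ x t, (∫ s in (0:ℝ)..(wf x t), f (φ s x)) = t)
    (hwg : ∀ x t, (∫ s in (0:ℝ)..(wg x t), g (φ s x)) = t)
    (u : M → ℝ) (hu : Continuous u)
    (hcohom : ∀ x (t : ℝ), u (φ t x) - u x = ∫ s in (0:ℝ)..t, (f (φ s x) - g (φ s x))) :
    ∃ h : M ≃ₜ M, ∀ (t : ℝ) (x : M), h (φ (wf x t) x) = φ (wg (h x) t) (h x) := by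
  -- rewrite `hwf`/`hwg` in terms of `G`
  have hGf : ∀ x t, G φ f x (wf x t) = t := hwf
  have hGg : ∀ x t, G φ g x (wg x t) = t := hwg
  -- cohomological equation in terms of `G`
  have hcoh : ∀ x (a : ℝ), u (φ a x) - u x = G φ f x a - G φ g x a := by
    intro x a
    rw [hcohom x a, G, G, integral_sub (intable φ hf x 0 a) (intable φ hg x 0 a)]
  set c : M → ℝ := fun x => wg x (u x) with hc
  set d : M → ℝ := fun x => wf x (-(u x)) with hd
  -- key identities
  have hucx : ∀ x, u (φ (c x) x) = G φ f x (c x) := by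
    intro x
    have := hcoh x (c x)
    have h2 : G φ g x (c x) = u x := hGg x (u x)
    linarith
  have hudx : ∀ x, u (φ (d x) x) = -(G φ g x (d x)) := by
    intro x
    have := hcoh x (d x)
    have h2 : G φ f x (d x) = -(u x) := hGf x (-(u x))
    linarith
  have left_inv : ∀ x, φ (d (φ (c x) x)) (φ (c x) x) = x := by
    intro x
    set y := φ (c x) x with hy
    have hneg : G φ f y (-(c x)) = -(u y) := by
      have hs := G_shift φ hf x (c x) (-(c x))
      rw [add_neg_cancel] at hs
      have h0 : G φ f x 0 = 0 := by simp [G]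
      have := hucx x
      rw [← hy] at hs
      linarith [hs, h0, this]
    have hdy : d y = -(c x) := by
      apply G_inj φ hf hfpos y
      rw [hneg]
      exact hGf y (-(u y))
    rw [hdy, ← φ.map_add, neg_add_cancel, φ.map_zero_apply]
  have right_inv : ∀ x, φ (c (φ (d x) x)) (φ (d x) x) = x := by
    intro x
    set y := φ (d x) x with hy
    have hneg : G φ g y (-(d x)) = u y := by
      have hs := G_shift φ hg x (d x) (-(d x))
      rw [add_neg_cancel] at hs
      have h0 : G φ g x 0 = 0 := by simp [G]
      have := hudx x
      rw [← hy] at hs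
      linarith [hs, h0, this]
    have hcy : c y = -(d x) := by
      apply G_inj φ hg hgpos y
      rw [hneg]
      exact hGg y (u y)
    rw [hcy, ← φ.map_add, neg_add_cancel, φ.map_zero_apply]
  have hc_cont : Continuous c := cont_w φ hg hgpos wg hGg u hu
  have hd_cont : Continuous d := cont_w φ hf hfpos wf hGf (fun x => -(u x)) hu.neg
  refine ⟨⟨⟨fun x => φ (c x) x, fun x => φ (d x) x, left_inv, right_inv⟩,
      φ.continuous hc_cont continuous_id, φ.continuous hd_cont continuous_id⟩, ?_⟩
  intro t x
  show φ (c (φ (wf x t) x)) (φ (wf x t) x) = φ (wg (φ (c x) x) t) (φ (c x) x)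
  set a := wf x t with ha
  set y := φ a x with hy
  set hx := φ (c x) x with hhx
  set W := c y + a - c x with hW
  -- compute `G φ g hx W = t`
  have e1 : G φ g x (a + c y) = u x + t := by
    have hs := G_shift φ hg x a (c y)
    have hGgy : G φ g y (c y) = u y := hGg y (u y)
    have huy : u y - u x = G φ f x a - G φ g x a := hcoh x a
    have hfa : G φ f x a = t := hGf x t
    rw [hs, hGgy]
    linarith
  have e2 : G φ g hx W = t := by
    have hs := G_shift φ hg x (c x) W
    have hcW : c x + W = a + c y := by rw [hW]; ring
    have hGgx : G φ g x (c x) = u x := hGg x (u x)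
    rw [hcW, e1, hGgx] at hs
    linarith
  have e3 : wg hx t = W := by
    apply G_inj φ hg hgpos hx
    rw [e2]
    exact hGg hx t
  rw [e3, ← φ.map_add, ← φ.map_add]
  congr 1
  ring
end

section
/- Suppose the flow φ on compact M is expansive with constant δ, meaning: for x, x' not on the same orbit of the centralizer of the generator, there exists t with dist(φ_t(x), φ_t(x')) ≥ δ. Suppose h_M : M × ℝ/ℤ → M is uniformly continuous and satisfies φ_t(h_M(x,θ)) = h_M(φ_t(x), θ + c(x,t)) for a function c independent of θ. Then for θ, θ' sufficiently close (depending only on the modulus of continuity of h_M and δ), the points h_M(x,θ) and h_M(x,θ') lie on the same centralizer orbit. -/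
theorem stmt13_general {M : Type*} [MetricSpace M] (φ : Flow ℝ M)
    (E : M → M → Prop) (δ : ℝ) (hδ : 0 < δ)
    (hexp : ∀ x x' : M, (∀ t : ℝ, dist (φ t x) (φ t x') < δ) → E x x')
    (hM : M × AddCircle (1 : ℝ) → M) (hMuc : UniformContinuous hM)
    (c : M → ℝ → ℝ)
    (heq : ∀ (t : ℝ) (x : M) (θ : AddCircle (1 : ℝ)),
      φ t (hM (x, θ)) = hM (φ t x, θ + ((c x t : ℝ) : AddCircle (1 : ℝ)))) :
    ∃ η > (0 : ℝ), ∀ (x : M) (θ θ' : AddCircle (1 : ℝ)),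
      dist θ θ' < η → E (hM (x, θ)) (hM (x, θ')) := by
  obtain ⟨η, hη, hclose⟩ := Metric.uniformContinuous_iff.mp hMuc δ hδ
  refine ⟨η, hη, fun x θ θ' hθ => hexp _ _ fun t => ?_⟩
  -- At time `t` both orbits are images under `hM` of the same base point with both angles
  -- rotated by `c x t`, and a rotation of the circle is an isometry.
  rw [heq, heq]
  apply hclose
  rwa [Prod.dist_eq, dist_self, dist_add_right, max_eq_right dist_nonneg]

/-- Suppose the flow `φ` on a compact metric space `M` is expansive with constant `δ`, in
the reformulated sense that any two points whose orbits stay at distance `< δ` for all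
times lie on the same centralizer orbit (an equivalence relation `E` on `M`).  Suppose
`h_M : M × ℝ/ℤ → M` is uniformly continuous and satisfies
`φ_t(h_M(x,θ)) = h_M(φ_t(x), θ + c(x,t))` for a function `c` independent of `θ`.  Then
there is `η > 0` such that whenever `θ, θ'` are at distance `< η`, the points `h_M(x,θ)`
and `h_M(x,θ')` lie on the same centralizer orbit. -/
theorem stmt13 {M : Type*} [MetricSpace M] [CompactSpace M] (φ : Flow ℝ M)
    (E : M → M → Prop) (hEquiv : Equivalence E) (δ : ℝ) (hδ : 0 < δ)
    (hexp : ∀ x x' : M, (∀ t : ℝ, dist (φ t x) (φ t x') < δ) → E x x')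
    (hM : M × AddCircle (1 : ℝ) → M) (hMuc : UniformContinuous hM)
    (c : M → ℝ → ℝ)
    (heq : ∀ (t : ℝ) (x : M) (θ : AddCircle (1 : ℝ)),
      φ t (hM (x, θ)) = hM (φ t x, θ + ((c x t : ℝ) : AddCircle (1 : ℝ)))) :
    ∃ η > (0 : ℝ), ∀ (x : M) (θ θ' : AddCircle (1 : ℝ)),
      dist θ θ' < η → E (hM (x, θ)) (hM (x, θ')) :=
  stmt13_general φ E δ hδ hexp hM hMuc c heq
end

section
/- Let h : M × ℝ/ℤ → M × ℝ/ℤ be a homeomorphism of the form h(x, θ) = (h̄(x), θ + U(x,θ) mod 1) with U continuous, conjugating Φ^f and Φ^g, where h̄ conjugates φ to itself. Then the fiber-average u(x) = ∫₀¹ U(x, θ) dθ satisfies u(φ_t(x)) − u(x) = ∫₀ᵗ (f ∘ h̄ − g)(φ_s(x)) ds for all x ∈ M, t ∈ ℝ. -/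
open MeasureTheory

/-- The skew-product map over `φ` with cocycle `f`, acting on `M × ℝ/ℤ`. -/
noncomputable def skewProd {M : Type*} (φ : ℝ → M → M) (f : M → ℝ) (t : ℝ)
    (p : M × AddCircle (1 : ℝ)) : M × AddCircle (1 : ℝ) :=
  (φ t p.1, p.2 + (((∫ s in (0:ℝ)..t, f (φ s p.1)) : ℝ) : AddCircle (1 : ℝ)))

/-! Comparing second coordinates in `Φ^f_t ∘ h = h ∘ Φ^g_t` at `(x, θ)` gives
`U(φ_t x, θ + G_t x) = U(x, θ) + F_t(h̄ x) - G_t x` modulo `1`, where `F_t`, `G_t` are the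
integrals of `f`, `g` along orbits up to time `t`. The defect is continuous in `t`, takes values
in `ℤ` and vanishes at `t = 0`, so the identity holds in `ℝ`. Averaging over `θ`, the shift by
`G_t x` disappears by translation invariance of Haar measure on the circle, and
`h̄ ∘ φ_t = φ_t ∘ h̄` rewrites `F_t(h̄ x)` as `∫₀ᵗ f(h̄(φ_s x)) ds`. -/

theorem AddCircle.eq_zero_of_continuous_of_coe_eq_zero {X : Type*} [TopologicalSpace X]
    [PreconnectedSpace X] {p : ℝ} {k : X → ℝ} (hk : Continuous k)
    (hkp : ∀ x, (k x : AddCircle p) = 0) {x₀ : X} (h₀ : k x₀ = 0) (x : X) : k x = 0 := by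
  rw [← h₀]
  exact isPreconnected_univ.constant_of_mapsTo
    (isDiscrete_iff_discreteTopology.2
      (inferInstanceAs (DiscreteTopology (AddSubgroup.zmultiples p))))
    hk.continuousOn (fun y _ => (QuotientAddGroup.eq_zero_iff _).1 (hkp y))
    (Set.mem_univ x) (Set.mem_univ x₀)

theorem AddCircle.integral_add_const {T : ℝ} [Fact (0 < T)] {F : AddCircle T → ℝ}
    (hF : Continuous F) (c : ℝ) : ∫ θ, (F θ + c) = (∫ θ, F θ) + T * c := by
  rw [integral_add (hF.integrable_of_hasCompactSupport (.of_compactSpace F)) (integrable_const c),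
    integral_const, smul_eq_mul, measureReal_def, AddCircle.measure_univ,
    ENNReal.toReal_ofReal (Fact.out : 0 < T).le]

theorem Flow.continuous_integral_comp {M : Type*} [TopologicalSpace M] (φ : Flow ℝ M)
    {f : M → ℝ} (hf : Continuous f) (x : M) :
    Continuous fun τ => ∫ s in (0:ℝ)..τ, f (φ s x) :=
  intervalIntegral.continuous_primitive
    (fun a b => (hf.comp (φ.continuous continuous_id continuous_const)).intervalIntegrable a b) 0

section Cocycle

variable {M : Type*} {f g : M → ℝ} {hbar : M → M} {U : M × AddCircle (1 : ℝ) → ℝ}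
  {H : M × AddCircle (1 : ℝ) → M × AddCircle (1 : ℝ)}

theorem coe_cocycle_eq_of_conj {φ : ℝ → M → M}
    (hform : ∀ p, H p = (hbar p.1, p.2 + ((U p : ℝ) : AddCircle (1 : ℝ))))
    (hconj : ∀ t p, skewProd φ f t (H p) = H (skewProd φ g t p))
    (x : M) (θ : AddCircle (1 : ℝ)) (τ : ℝ) :
    ((U (x, θ) + (∫ s in (0:ℝ)..τ, f (φ s (hbar x))) - (∫ s in (0:ℝ)..τ, g (φ s x))
      - U (φ τ x, θ + ((∫ s in (0:ℝ)..τ, g (φ s x) : ℝ) : AddCircle (1 : ℝ))) : ℝ) :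
        AddCircle (1 : ℝ)) = 0 := by
  have hsnd := congrArg Prod.snd (hconj τ (x, θ))
  simp only [skewProd, hform] at hsnd
  rw [← sub_eq_zero] at hsnd
  simp only [QuotientAddGroup.mk_sub, QuotientAddGroup.mk_add]
  rw [← hsnd]
  abel

theorem cocycle_eq_of_conj [TopologicalSpace M] (φ : Flow ℝ M) (hf : Continuous f)
    (hg : Continuous g) (hU : Continuous U)
    (hform : ∀ p, H p = (hbar p.1, p.2 + ((U p : ℝ) : AddCircle (1 : ℝ))))
    (hconj : ∀ t p,
      skewProd (fun s => φ s) f t (H p) = H (skewProd (fun s => φ s) g t p))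
    (x : M) (θ : AddCircle (1 : ℝ)) (τ : ℝ) :
    U (φ τ x, θ + ((∫ s in (0:ℝ)..τ, g (φ s x) : ℝ) : AddCircle (1 : ℝ)))
      = U (x, θ) + (∫ s in (0:ℝ)..τ, f (φ s (hbar x))) - ∫ s in (0:ℝ)..τ, g (φ s x) := by
  have hF := φ.continuous_integral_comp hf (hbar x)
  have hG := φ.continuous_integral_comp hg x
  have hdefect := AddCircle.eq_zero_of_continuous_of_coe_eq_zero (by fun_prop)
    (coe_cocycle_eq_of_conj hform hconj x θ) (x₀ := 0) (by simp) τ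
  linarith

end Cocycle

theorem stmt17_general {M : Type*} [MetricSpace M]
    (φ : Flow ℝ M) (f g : M → ℝ) (hf : Continuous f) (hg : Continuous g)
    (hbar : M → M) (U : M × AddCircle (1 : ℝ) → ℝ) (hU : Continuous U)
    (h : M × AddCircle (1 : ℝ) ≃ₜ M × AddCircle (1 : ℝ))
    (hform : ∀ p : M × AddCircle (1 : ℝ),
      h p = (hbar p.1, p.2 + ((U p : ℝ) : AddCircle (1 : ℝ))))
    (hconj : ∀ (t : ℝ) (p : M × AddCircle (1 : ℝ)),
      skewProd (fun s => φ s) f t (h p) = h (skewProd (fun s => φ s) g t p))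
    (hcomm : ∀ (t : ℝ) (x : M), hbar (φ t x) = φ t (hbar x))
    (u : M → ℝ) (hu : ∀ x, u x = ∫ θ : AddCircle (1 : ℝ), U (x, θ)) :
    ∀ (x : M) (t : ℝ),
      u (φ t x) - u x = ∫ s in (0:ℝ)..t, (f (hbar (φ s x)) - g (φ s x)) := by
  intro x t
  rw [hu, hu, ← integral_add_right_eq_self _
    ((∫ s in (0:ℝ)..t, g (φ s x) : ℝ) : AddCircle (1 : ℝ))]
  simp_rw [cocycle_eq_of_conj φ hf hg hU hform hconj, add_sub_assoc]
  rw [AddCircle.integral_add_const (by fun_prop), one_mul, add_sub_cancel_left]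
  simp_rw [hcomm]
  have hF : Continuous fun s => f (φ s (hbar x)) := by fun_prop
  have hG : Continuous fun s => g (φ s x) := by fun_prop
  exact (intervalIntegral.integral_sub (hF.intervalIntegrable _ _) (hG.intervalIntegrable _ _)).symm

/-- Let `h(x,θ) = (h̄(x), θ + U(x,θ) mod 1)` be a homeomorphism of `M × ℝ/ℤ`, with `U`
continuous, conjugating the skew products `Φ^f` and `Φ^g`, where `h̄` conjugates the flow
`φ` to itself.  Then the fiber average `u(x) = ∫₀¹ U(x,θ) dθ` satisfies
`u(φ_t(x)) − u(x) = ∫₀ᵗ (f ∘ h̄ − g)(φ_s(x)) ds` for all `x ∈ M`, `t ∈ ℝ`. -/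
theorem stmt17 {M : Type*} [MetricSpace M] [CompactSpace M] [ConnectedSpace M]
    (φ : Flow ℝ M) (f g : M → ℝ) (hf : Continuous f) (hg : Continuous g)
    (hbar : M → M) (U : M × AddCircle (1 : ℝ) → ℝ) (hU : Continuous U)
    (h : M × AddCircle (1 : ℝ) ≃ₜ M × AddCircle (1 : ℝ))
    (hform : ∀ p : M × AddCircle (1 : ℝ),
      h p = (hbar p.1, p.2 + ((U p : ℝ) : AddCircle (1 : ℝ))))
    (hconj : ∀ (t : ℝ) (p : M × AddCircle (1 : ℝ)),
      skewProd (fun s => φ s) f t (h p) = h (skewProd (fun s => φ s) g t p))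
    (hcomm : ∀ (t : ℝ) (x : M), hbar (φ t x) = φ t (hbar x))
    (u : M → ℝ) (hu : ∀ x, u x = ∫ θ : AddCircle (1 : ℝ), U (x, θ)) :
    ∀ (x : M) (t : ℝ),
      u (φ t x) - u x = ∫ s in (0:ℝ)..t, (f (hbar (φ s x)) - g (φ s x)) :=
  stmt17_general φ f g hf hg hbar U hU h hform hconj hcomm u hu
end
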